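/- arXiv:2206.12854 — 7 statements merged into one kernel-verified Lean document; each statement's English description precedes it below -/
import Mathlib

section
/- Let n ≥ 1 be an integer, let 1 < p < ∞, and let δ ≥ 0. For every smooth function u : ℝⁿ → ℝ whose support is a compact subset of the open upper half-space ℝ^{n−1} × (0,∞), one has ∫_{ℝ^{n−1}×(0,∞)} y^{−(δ+1)p} |u(x,y)|^p dx dy ≤ (p/((δ+1)p−1))^p · ∫_{ℝ^{n−1}×(0,∞)} y^{−δp} |∂_y u(x,y)|^p dx dy, where ∂_y u denotes the partial derivative of u in the last coordinate. (Note (δ+1)p − 1 ≥ p − 1 > 0, so the constant is finite; in particular the left-hand side is finite whenever the right-hand side is.) -/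
/-!
On each vertical line the inequality is one-dimensional. For `v` with compact support in
`(0, ∞)` and `α = (δ + 1) p - 1 > 0`, integrating `(y ^ (-α) |v| ^ p)'` over the half-line gives
`α ∫ y ^ (-α-1) |v| ^ p = p ∫ y ^ (-α) |v| ^ (p-2) v v' ≤ p ∫ y ^ (-α) |v| ^ (p-1) |v'|`.
Hölder's inequality with exponents `p / (p - 1)` and `p` bounds the right-hand side by
`p I ^ (1 - 1/p) J ^ (1/p)`, where `I = ∫ y ^ (-(δ+1)p) |v| ^ p` and
`J = ∫ y ^ (-δp) |v'| ^ p`; since `I` is finite, dividing by `I ^ (1 - 1/p)` gives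
`I ≤ (p / α) ^ p J`. Tonelli's theorem then integrates the one-dimensional inequality over the
horizontal variable.
-/

open MeasureTheory Set Function

lemma abs_rpow_sub_two_mul_self_mul_le (p a b : ℝ) :
    |a| ^ (p - 2) * a * b ≤ |a| ^ (p - 1) * |b| := by
  rcases eq_or_ne a 0 with rfl | ha
  · simpa using mul_nonneg (Real.rpow_nonneg le_rfl (p - 1)) (abs_nonneg b)
  calc |a| ^ (p - 2) * a * b ≤ |a| ^ (p - 2) * |a| * |b| := by
        rw [mul_assoc, mul_assoc]
        exact mul_le_mul_of_nonneg_left ((le_abs_self _).trans (abs_mul a b).le)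
          (Real.rpow_nonneg (abs_nonneg a) _)
    _ = |a| ^ (p - 1) * |b| := by
        rw [← Real.rpow_add_one (abs_ne_zero.2 ha)]
        ring_nf

lemma le_rpow_mul_of_le_mul_rpow_mul_rpow {p q I J C : ℝ} (hpq : p.HolderConjugate q)
    (hI : 0 ≤ I) (hJ : 0 ≤ J) (hC : 0 ≤ C) (h : I ≤ C * (I ^ (1 / q) * J ^ (1 / p))) :
    I ≤ C ^ p * J := by
  rcases hI.eq_or_lt with rfl | hI
  · positivity
  have hroot : I ^ (1 / p) ≤ C * J ^ (1 / p) := by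
    refine le_of_mul_le_mul_left ?_ (Real.rpow_pos_of_pos hI (1 / q))
    calc I ^ (1 / q) * I ^ (1 / p) = I := by
          rw [← Real.rpow_add hI, add_comm, hpq.one_div_add_one_div, div_one, Real.rpow_one]
      _ ≤ I ^ (1 / q) * (C * J ^ (1 / p)) := by linarith
  calc I = (I ^ (1 / p)) ^ p := by
        rw [← Real.rpow_mul hI.le, one_div_mul_cancel hpq.ne_zero, Real.rpow_one]
    _ ≤ (C * J ^ (1 / p)) ^ p := by gcongr; exact hpq.nonneg
    _ = C ^ p * J := by
        rw [Real.mul_rpow hC (by positivity), ← Real.rpow_mul hJ, one_div_mul_cancel hpq.ne_zero,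
          Real.rpow_one]

lemma HasCompactSupport.comp_prodMk {X Y : Type*} [TopologicalSpace X] [TopologicalSpace Y]
    [T2Space Y] {u : X × Y → ℝ} (hu : HasCompactSupport u) (x : X) :
    HasCompactSupport (u ∘ Prod.mk x) :=
  HasCompactSupport.intro (hu.image continuous_snd) fun y hy =>
    image_eq_zero_of_notMem_tsupport (f := u) fun h => hy ⟨(x, y), h, rfl⟩

section WeightedHalfLine

variable {g : ℝ → ℝ}

lemma continuous_rpow_mul_of_tsupport_subset_Ioi (hg : Continuous g) (hpos : tsupport g ⊆ Ioi 0)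
    (e : ℝ) : Continuous fun y => y ^ e * g y := by
  refine continuous_iff_continuousAt.2 fun y => ?_
  by_cases hy : y ∈ tsupport g
  · exact (Real.continuousAt_rpow_const y e (Or.inl (hpos hy).ne')).mul hg.continuousAt
  · refine continuousAt_const.congr (f := fun _ => (0 : ℝ)) ?_
    filter_upwards [notMem_tsupport_iff_eventuallyEq.1 hy] with z hz
    simp [hz]

variable {K : Set ℝ}

lemma memLp_rpow_mul (hK : IsCompact K) (hKpos : K ⊆ Ioi 0) (hg : Continuous g)
    (hgK : support g ⊆ K) (e : ℝ) (r : ENNReal) : MemLp (fun y => y ^ e * g y) r := by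
  have htsupp : tsupport g ⊆ K := closure_minimal hgK hK.isClosed
  exact (continuous_rpow_mul_of_tsupport_subset_Ioi hg (htsupp.trans hKpos)
    e).memLp_of_hasCompactSupport
      (.of_support_subset_isCompact hK ((support_mul_subset_right _ g).trans hgK))

lemma integrable_rpow_mul (hK : IsCompact K) (hKpos : K ⊆ Ioi 0) (hg : Continuous g)
    (hgK : support g ⊆ K) (e : ℝ) : Integrable fun y => y ^ e * g y :=
  memLp_one_iff_integrable.1 (memLp_rpow_mul hK hKpos hg hgK e 1)

lemma hasDerivAt_rpow_mul_of_tsupport_subset_Ioi (hg : Differentiable ℝ g)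
    (hpos : tsupport g ⊆ Ioi 0) (e y : ℝ) :
    HasDerivAt (fun y => y ^ e * g y) (e * y ^ (e - 1) * g y + y ^ e * deriv g y) y := by
  by_cases hy : y ∈ tsupport g
  · exact (Real.hasDerivAt_rpow_const (Or.inl (hpos hy).ne')).mul (hg y).hasDerivAt
  · have hev := notMem_tsupport_iff_eventuallyEq.1 hy
    have hderiv : deriv g y = 0 :=
      image_eq_zero_of_notMem_tsupport fun h => hy (tsupport_deriv_subset h)
    rw [hev.eq_of_nhds, hderiv, Pi.zero_apply, mul_zero, mul_zero, add_zero]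
    refine (hasDerivAt_const y (0 : ℝ)).congr_of_eventuallyEq ?_
    filter_upwards [hev] with z hz
    simp [hz]

lemma integral_Ioi_rpow_mul_deriv (hg : ContDiff ℝ 1 g) (hcs : HasCompactSupport g)
    (hpos : tsupport g ⊆ Ioi 0) (e : ℝ) :
    ∫ y in Ioi 0, y ^ e * deriv g y = -e * ∫ y in Ioi 0, y ^ (e - 1) * g y := by
  have hzero : ∀ y ∉ Ioi (0 : ℝ), g y = 0 := fun y hy =>
    image_eq_zero_of_notMem_tsupport fun h => hy (hpos h)
  have hzero' : ∀ y ∉ Ioi (0 : ℝ), deriv g y = 0 := fun y hy =>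
    image_eq_zero_of_notMem_tsupport fun h => hy (hpos (tsupport_deriv_subset h))
  have hint : Integrable fun y => y ^ (e - 1) * g y :=
    integrable_rpow_mul hcs hpos hg.continuous (subset_tsupport g) _
  have hint' : Integrable fun y => y ^ e * deriv g y :=
    integrable_rpow_mul hcs hpos (hg.continuous_deriv le_rfl) support_deriv_subset _
  have hFTC := integral_eq_zero_of_hasDerivAt_of_integrable
    (hasDerivAt_rpow_mul_of_tsupport_subset_Ioi (hg.differentiable one_ne_zero) hpos e)
    ((hint.const_mul e).add hint' |>.congr
      (ae_of_all _ fun y => by simp only [Pi.add_apply]; ring))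
    (integrable_rpow_mul hcs hpos hg.continuous (subset_tsupport g) e)
  simp only [mul_assoc] at hFTC
  rw [integral_add (hint.const_mul e) hint', integral_const_mul] at hFTC
  rw [setIntegral_eq_integral_of_forall_compl_eq_zero fun y hy => by simp [hzero' y hy],
    setIntegral_eq_integral_of_forall_compl_eq_zero fun y hy => by simp [hzero y hy]]
  linarith

lemma integral_Ioi_rpow_mul_mul_le_of_holderConjugate (hK : IsCompact K) (hKpos : K ⊆ Ioi 0)
    {f h : ℝ → ℝ} (hf : Continuous f) (hh : Continuous h) (hfK : support f ⊆ K)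
    (hhK : support h ⊆ K) (hf0 : ∀ y, 0 ≤ f y) (hh0 : ∀ y, 0 ≤ h y) {p q : ℝ}
    (hpq : p.HolderConjugate q) (a b : ℝ) :
    ∫ y in Ioi 0, y ^ (a + b) * (f y * h y) ≤
      (∫ y in Ioi 0, y ^ (a * p) * f y ^ p) ^ (1 / p) *
        (∫ y in Ioi 0, y ^ (b * q) * h y ^ q) ^ (1 / q) := by
  have hrpow_mul : ∀ (c r : ℝ) (k : ℝ → ℝ), (∀ y, 0 ≤ k y) →
      ∫ y in Ioi 0, (y ^ c * k y) ^ r = ∫ y in Ioi 0, y ^ (c * r) * k y ^ r := fun c r k hk =>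
    setIntegral_congr_fun measurableSet_Ioi fun y (hy : 0 < y) => by
      rw [Real.mul_rpow (Real.rpow_nonneg hy.le c) (hk y), ← Real.rpow_mul hy.le]
  have hnonneg : ∀ (c : ℝ) (k : ℝ → ℝ), (∀ y, 0 ≤ k y) →
      0 ≤ᵐ[volume.restrict (Ioi 0)] fun y => y ^ c * k y := fun c k hk => by
    filter_upwards [ae_restrict_mem measurableSet_Ioi] with y (hy : 0 < y)
    exact mul_nonneg (Real.rpow_nonneg hy.le c) (hk y)
  calc ∫ y in Ioi 0, y ^ (a + b) * (f y * h y)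
      = ∫ y in Ioi 0, (y ^ a * f y) * (y ^ b * h y) :=
        setIntegral_congr_fun measurableSet_Ioi fun y (hy : 0 < y) => by
          rw [Real.rpow_add hy]; ring
    _ ≤ (∫ y in Ioi 0, (y ^ a * f y) ^ p) ^ (1 / p) *
          (∫ y in Ioi 0, (y ^ b * h y) ^ q) ^ (1 / q) :=
        integral_mul_le_Lp_mul_Lq_of_nonneg hpq (hnonneg a f hf0) (hnonneg b h hh0)
          ((memLp_rpow_mul hK hKpos hf hfK a _).restrict _)
          ((memLp_rpow_mul hK hKpos hh hhK b _).restrict _)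
    _ = _ := by rw [hrpow_mul a p f hf0, hrpow_mul b q h hh0]

end WeightedHalfLine

section HalfLine

variable {v : ℝ → ℝ} {p : ℝ}

lemma mul_integral_Ioi_rpow_mul_abs_rpow_le (hv : ContDiff ℝ 1 v) (hcs : HasCompactSupport v)
    (hpos : tsupport v ⊆ Ioi 0) (hp : 1 < p) (α : ℝ) :
    α * ∫ y in Ioi 0, y ^ (-α - 1) * |v y| ^ p ≤
      p * ∫ y in Ioi 0, y ^ (-α) * (|v y| ^ (p - 1) * |deriv v y|) := by
  have hp0 : 0 < p := by linarith
  set g := fun y => |v y| ^ p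
  have hg : ContDiff ℝ 1 g := by
    have h := (contDiff_norm_rpow hp).comp hv
    simp only [Real.norm_eq_abs] at h
    exact h
  have hg0 : (fun t : ℝ => |t| ^ p) 0 = 0 := by simp [Real.zero_rpow hp0.ne']
  have hgcs : HasCompactSupport g := hcs.comp_left (g := fun t : ℝ => |t| ^ p) hg0
  have hgpos : tsupport g ⊆ Ioi 0 :=
    (tsupport_comp_subset (g := fun t : ℝ => |t| ^ p) hg0 v).trans hpos
  have hderiv_le : ∀ y, deriv g y ≤ p * (|v y| ^ (p - 1) * |deriv v y|) := fun y => by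
    have h : HasDerivAt g (p * |v y| ^ (p - 2) * v y * deriv v y) y :=
      (hasDerivAt_abs_rpow (v y) hp).comp y (hv.differentiable one_ne_zero y).hasDerivAt
    rw [h.deriv, mul_assoc p, mul_assoc p]
    exact mul_le_mul_of_nonneg_left (abs_rpow_sub_two_mul_self_mul_le p _ _) hp0.le
  have hbound_cont : Continuous fun y => |v y| ^ (p - 1) * |deriv v y| :=
    (hv.continuous.abs.rpow_const fun _ => Or.inr (by linarith)).mul
      (hv.continuous_deriv le_rfl).abs
  have hbound_supp : support (fun y => |v y| ^ (p - 1) * |deriv v y|) ⊆ tsupport v :=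
    (support_mul_subset_right _ _).trans
      ((support_comp_subset abs_zero (deriv v)).trans support_deriv_subset)
  have hibp : α * ∫ y in Ioi 0, y ^ (-α - 1) * g y = ∫ y in Ioi 0, y ^ (-α) * deriv g y := by
    rw [integral_Ioi_rpow_mul_deriv hg hgcs hgpos, neg_neg]
  rw [hibp, ← integral_const_mul]
  refine setIntegral_mono_on
    (integrable_rpow_mul hgcs hgpos (hg.continuous_deriv le_rfl)
      support_deriv_subset _).integrableOn
    ((integrable_rpow_mul hcs hpos hbound_cont hbound_supp _).const_mul p).integrableOn
    measurableSet_Ioi fun y (hy : 0 < y) => ?_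
  rw [mul_left_comm]
  exact mul_le_mul_of_nonneg_left (hderiv_le y) (Real.rpow_nonneg hy.le _)

theorem integral_Ioi_rpow_mul_abs_rpow_le (hv : ContDiff ℝ 1 v) (hcs : HasCompactSupport v)
    (hpos : tsupport v ⊆ Ioi 0) {δ : ℝ} (hp : 1 < p) (hδp : 1 < (δ + 1) * p) :
    ∫ y in Ioi 0, y ^ (-((δ + 1) * p)) * |v y| ^ p ≤
      (p / ((δ + 1) * p - 1)) ^ p * ∫ y in Ioi 0, y ^ (-(δ * p)) * |deriv v y| ^ p := by
  set α := (δ + 1) * p - 1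
  have hα : 0 < α := by linarith
  have hp0 : 0 < p := by linarith
  have hpq := Real.HolderConjugate.conjExponent hp
  set q := p.conjExponent
  set I := ∫ y in Ioi 0, y ^ (-((δ + 1) * p)) * |v y| ^ p
  set J := ∫ y in Ioi 0, y ^ (-(δ * p)) * |deriv v y| ^ p
  have hIM := mul_integral_Ioi_rpow_mul_abs_rpow_le hv hcs hpos hp α
  rw [show -α - 1 = -((δ + 1) * p) by ring] at hIM
  have hholder := integral_Ioi_rpow_mul_mul_le_of_holderConjugate hcs hpos
    (hv.continuous.abs.rpow_const fun _ => Or.inr (by linarith))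
    (hv.continuous_deriv le_rfl).abs
    ((support_comp_subset (g := fun t : ℝ => |t| ^ (p - 1))
      (by simp [Real.zero_rpow (by linarith : p - 1 ≠ 0)]) v).trans (subset_tsupport v))
    ((support_comp_subset abs_zero (deriv v)).trans support_deriv_subset)
    (fun y => by positivity) (fun y => abs_nonneg _) hpq.symm (-((δ + 1) * (p - 1))) (-δ)
  simp_rw [← Real.rpow_mul (abs_nonneg _), hpq.sub_one_mul_conj] at hholder
  rw [show -((δ + 1) * (p - 1)) + -δ = -α by ring, neg_mul, mul_assoc,
    hpq.sub_one_mul_conj, neg_mul] at hholder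
  have hI : 0 ≤ I := setIntegral_nonneg measurableSet_Ioi fun y (hy : 0 < y) => by positivity
  have hJ : 0 ≤ J := setIntegral_nonneg measurableSet_Ioi fun y (hy : 0 < y) => by positivity
  refine le_rpow_mul_of_le_mul_rpow_mul_rpow hpq hI hJ (by positivity) ?_
  rw [div_mul_eq_mul_div, le_div_iff₀' hα]
  exact hIM.trans (mul_le_mul_of_nonneg_left hholder hp0.le)

theorem lintegral_Ioi_rpow_mul_abs_rpow_le (hv : ContDiff ℝ 1 v) (hcs : HasCompactSupport v)
    (hpos : tsupport v ⊆ Ioi 0) {δ : ℝ} (hp : 1 < p) (hδp : 1 < (δ + 1) * p) :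
    ∫⁻ y in Ioi 0, ENNReal.ofReal (y ^ (-((δ + 1) * p)) * |v y| ^ p) ≤
      ENNReal.ofReal ((p / ((δ + 1) * p - 1)) ^ p) *
        ∫⁻ y in Ioi 0, ENNReal.ofReal (y ^ (-(δ * p)) * |deriv v y| ^ p) := by
  have hp0 : 0 < p := by linarith
  have hsupp_pow : ∀ k : ℝ → ℝ, support (fun y => |k y| ^ p) ⊆ support k := fun k =>
    support_comp_subset (g := fun t : ℝ => |t| ^ p) (by simp [Real.zero_rpow hp0.ne']) k
  have hnonneg : ∀ (e : ℝ) (k : ℝ → ℝ),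
      0 ≤ᵐ[volume.restrict (Ioi 0)] fun y => y ^ e * |k y| ^ p := fun e k => by
    filter_upwards [ae_restrict_mem measurableSet_Ioi] with y (hy : 0 < y)
    positivity
  rw [← ofReal_integral_eq_lintegral_ofReal
      (integrable_rpow_mul hcs hpos (hv.continuous.abs.rpow_const fun _ => Or.inr hp0.le)
        ((hsupp_pow v).trans (subset_tsupport v)) _).integrableOn (hnonneg _ v),
    ← ofReal_integral_eq_lintegral_ofReal
      (integrable_rpow_mul hcs hpos
        ((hv.continuous_deriv le_rfl).abs.rpow_const fun _ => Or.inr hp0.le)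
        ((hsupp_pow (deriv v)).trans support_deriv_subset) _).integrableOn (hnonneg _ (deriv v)),
    ← ENNReal.ofReal_mul (by positivity)]
  exact ENNReal.ofReal_le_ofReal (integral_Ioi_rpow_mul_abs_rpow_le hv hcs hpos hp hδp)

end HalfLine

theorem lintegral_prod_Ioi_rpow_mul_abs_rpow_le {E : Type*} [NormedAddCommGroup E]
    [NormedSpace ℝ E] [MeasurableSpace E] [BorelSpace E] [SecondCountableTopology E]
    (μ : Measure E) [SFinite μ] {u : E × ℝ → ℝ} (hu : ContDiff ℝ 1 u)
    (hcs : HasCompactSupport u) (hpos : tsupport u ⊆ {z | 0 < z.2}) {p δ : ℝ} (hp : 1 < p)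
    (hδp : 1 < (δ + 1) * p) :
    ∫⁻ z, ENNReal.ofReal (z.2 ^ (-((δ + 1) * p)) * |u z| ^ p)
        ∂μ.prod (volume.restrict (Ioi 0)) ≤
      ENNReal.ofReal ((p / ((δ + 1) * p - 1)) ^ p) *
        ∫⁻ z, ENNReal.ofReal (z.2 ^ (-(δ * p)) * |fderiv ℝ u z (0, 1)| ^ p)
          ∂μ.prod (volume.restrict (Ioi 0)) := by
  have hu_meas : Measurable u := hu.continuous.measurable
  have hu'_meas : Measurable fun z => fderiv ℝ u z (0, 1) :=
    ((hu.continuous_fderiv one_ne_zero).clm_apply continuous_const).measurable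
  rw [lintegral_prod _ (by fun_prop), lintegral_prod _ (by fun_prop),
    ← lintegral_const_mul' _ _ ENNReal.ofReal_ne_top]
  refine lintegral_mono fun x => ?_
  have hderiv : ∀ y, deriv (u ∘ Prod.mk x) y = fderiv ℝ u (x, y) (0, 1) := fun y =>
    ((hu.differentiable one_ne_zero (x, y)).hasFDerivAt.comp_hasDerivAt y
      ((hasDerivAt_const y x).prodMk (hasDerivAt_id y))).deriv
  simp only [← hderiv]
  exact lintegral_Ioi_rpow_mul_abs_rpow_le (hu.comp (contDiff_prodMk_right x))
    (hcs.comp_prodMk x) ((tsupport_comp_subset_preimage u (by fun_prop)).trans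
      fun y hy => hpos hy) hp hδp

theorem weighted_hardy_halfspace_smooth_general (n : ℕ) (p δ : ℝ)
    (hp : 1 < p) (hδ : 0 ≤ δ)
    (u : EuclideanSpace ℝ (Fin (n - 1)) × ℝ → ℝ)
    (hu : ContDiff ℝ (⊤ : ℕ∞) u) (hcs : HasCompactSupport u)
    (hsupp : tsupport u ⊆ {z : EuclideanSpace ℝ (Fin (n - 1)) × ℝ | 0 < z.2}) :
    ∫⁻ z in {z : EuclideanSpace ℝ (Fin (n - 1)) × ℝ | 0 < z.2},
        ENNReal.ofReal (z.2 ^ (-((δ + 1) * p)) * |u z| ^ p) ∂volume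
      ≤ ENNReal.ofReal ((p / ((δ + 1) * p - 1)) ^ p) *
        ∫⁻ z in {z : EuclideanSpace ℝ (Fin (n - 1)) × ℝ | 0 < z.2},
          ENNReal.ofReal (z.2 ^ (-(δ * p)) *
            |fderiv ℝ u z ((0 : EuclideanSpace ℝ (Fin (n - 1))), (1 : ℝ))| ^ p) ∂volume := by
  have hhalf :
      volume.restrict {z : EuclideanSpace ℝ (Fin (n - 1)) × ℝ | 0 < z.2} =
        volume.prod (volume.restrict (Ioi 0)) := by
    rw [← Measure.restrict_univ (μ := (volume : Measure (EuclideanSpace ℝ (Fin (n - 1))))),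
      Measure.prod_restrict, univ_prod, ← Measure.volume_eq_prod]
    rfl
  rw [hhalf]
  exact lintegral_prod_Ioi_rpow_mul_abs_rpow_le volume (hu.of_le (by exact_mod_cast le_top)) hcs
    hsupp hp (by nlinarith)

/-- **Weighted Hardy inequality on the half-space** for smooth functions compactly
supported in the open upper half-space `ℝ^{n-1} × (0,∞)`:
`∫ y^{-(δ+1)p} |u|^p ≤ (p/((δ+1)p-1))^p ∫ y^{-δp} |∂_y u|^p`. -/
theorem weighted_hardy_halfspace_smooth (n : ℕ) (hn : 1 ≤ n) (p δ : ℝ)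
    (hp : 1 < p) (hδ : 0 ≤ δ)
    (u : EuclideanSpace ℝ (Fin (n - 1)) × ℝ → ℝ)
    (hu : ContDiff ℝ (⊤ : ℕ∞) u) (hcs : HasCompactSupport u)
    (hsupp : tsupport u ⊆ {z : EuclideanSpace ℝ (Fin (n - 1)) × ℝ | 0 < z.2}) :
    ∫⁻ z in {z : EuclideanSpace ℝ (Fin (n - 1)) × ℝ | 0 < z.2},
        ENNReal.ofReal (z.2 ^ (-((δ + 1) * p)) * |u z| ^ p) ∂volume
      ≤ ENNReal.ofReal ((p / ((δ + 1) * p - 1)) ^ p) *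
        ∫⁻ z in {z : EuclideanSpace ℝ (Fin (n - 1)) × ℝ | 0 < z.2},
          ENNReal.ofReal (z.2 ^ (-(δ * p)) *
            |fderiv ℝ u z ((0 : EuclideanSpace ℝ (Fin (n - 1))), (1 : ℝ))| ^ p) ∂volume :=
  weighted_hardy_halfspace_smooth_general n p δ hp hδ u hu hcs hsupp
end

section
/- Let n ≥ 1 be an integer, 1 < p < ∞, and δ ≥ 0. Suppose u : ℝ^{n−1} × ℝ → ℝ is continuously differentiable, u(x,0) = 0 for every x ∈ ℝ^{n−1}, and the integrals ∫_{ℝ^{n−1}×(0,∞)} |u|^p dx dy, ∫_{ℝ^{n−1}×(0,∞)} |∇u|^p dx dy, and ∫_{ℝ^{n−1}×(0,∞)} y^{−δp} |∂_y u|^p dx dy are all finite (∇u denotes the full gradient and ∂_y u the partial derivative in the last coordinate). Then ∫_{ℝ^{n−1}×(0,∞)} y^{−(δ+1)p} |u|^p dx dy ≤ (p/((δ+1)p−1))^p · ∫_{ℝ^{n−1}×(0,∞)} y^{−δp} |∂_y u|^p dx dy. -/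
open MeasureTheory

/-- The Euclidean norm of the full gradient of `u : ℝ^{m} × ℝ → ℝ`. -/
noncomputable def euclGradNorm (m : ℕ) (u : EuclideanSpace ℝ (Fin m) × ℝ → ℝ)
    (z : EuclideanSpace ℝ (Fin m) × ℝ) : ℝ :=
  Real.sqrt ((∑ i : Fin m, (fderiv ℝ u z (EuclideanSpace.single i 1, 0)) ^ 2) +
    (fderiv ℝ u z ((0 : EuclideanSpace ℝ (Fin m)), (1 : ℝ))) ^ 2)

/-!
Slicing the half-space along the normal direction reduces everything to one variable. There
`u(y) = ∫₀^y ∂_y u` because `u(0) = 0`, and the weighted Hardy inequality for this primitive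
follows from Hölder's inequality, with `g = (t^{(1-α)(p-1)} g^p)^{1/p} (t^{α-1})^{1-1/p}` and
`α = ((δ+1)p - 1)/p`, followed by Tonelli: integrating the resulting weight `y^{-α-1}` over
`y > t` gives `t^{-α}/α`, and the powers of `t` and the constants combine to `t^{-δp}` and
`α^{-p} = (p/((δ+1)p-1))^p`.
-/

open Set
open scoped ENNReal

theorem lintegral_Ioo_zero_rpow {y r : ℝ} (hy : 0 < y) (hr : -1 < r) :
    ∫⁻ t in Ioo 0 y, ENNReal.ofReal (t ^ r) = ENNReal.ofReal (y ^ (r + 1) / (r + 1)) := by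
  have hint : IntegrableOn (fun t : ℝ => t ^ r) (Ioc 0 y) :=
    (intervalIntegrable_iff_integrableOn_Ioc_of_le hy.le).mp
      (intervalIntegral.intervalIntegrable_rpow' hr)
  rw [restrict_Ioo_eq_restrict_Ioc, ← ofReal_integral_eq_lintegral_ofReal hint
    ((ae_restrict_mem measurableSet_Ioc).mono fun t ht => Real.rpow_nonneg ht.1.le r),
    ← intervalIntegral.integral_of_le hy.le, integral_rpow (Or.inl hr),
    Real.zero_rpow (by linarith), sub_zero]

theorem lintegral_Ioi_rpow {t e : ℝ} (ht : 0 < t) (he : e < -1) :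
    ∫⁻ y in Ioi t, ENNReal.ofReal (y ^ e) = ENNReal.ofReal (t ^ (e + 1) / -(e + 1)) := by
  rw [← ofReal_integral_eq_lintegral_ofReal (integrableOn_Ioi_rpow_of_lt he ht)
    ((ae_restrict_mem measurableSet_Ioi).mono fun y hy => Real.rpow_nonneg (ht.trans hy).le e),
    integral_Ioi_rpow_of_lt he ht, div_neg, neg_div]

theorem lintegral_Ioi_mul_lintegral_Ioo {w h : ℝ → ℝ≥0∞} (hw : Measurable w) (hh : Measurable h) :
    ∫⁻ y in Ioi 0, w y * ∫⁻ t in Ioo 0 y, h t = ∫⁻ t in Ioi 0, (∫⁻ y in Ioi t, w y) * h t := by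
  have hindicator : ∀ y t : ℝ, w y * (Ioo 0 y).indicator h t
      = (Ioi t).indicator w y * (Ioi 0).indicator h t := by
    intro y t
    by_cases h0t : 0 < t <;> by_cases hty : t < y <;>
      simp [indicator, h0t, hty]
  have hmeas : Measurable (Function.uncurry fun y t : ℝ =>
      (Ioi t).indicator w y * (Ioi 0).indicator h t) := by
    have : Measurable fun z : ℝ × ℝ => {z : ℝ × ℝ | z.2 < z.1}.indicator (fun z => w z.1) z :=
      (hw.comp measurable_fst).indicator (measurableSet_lt measurable_snd measurable_fst)
    exact this.mul ((hh.indicator measurableSet_Ioi).comp measurable_snd)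
  calc ∫⁻ y in Ioi 0, w y * ∫⁻ t in Ioo 0 y, h t
      = ∫⁻ y in Ioi 0, ∫⁻ t, (Ioi t).indicator w y * (Ioi 0).indicator h t := by
        simp_rw [← hindicator, ← lintegral_indicator measurableSet_Ioo,
          ← lintegral_const_mul _ (hh.indicator measurableSet_Ioo)]
    _ = ∫⁻ t, ∫⁻ y in Ioi 0, (Ioi t).indicator w y * (Ioi 0).indicator h t :=
        lintegral_lintegral_swap hmeas.aemeasurable
    _ = ∫⁻ t in Ioi 0, (∫⁻ y in Ioi t, w y) * h t := by
        have hinner : ∀ t, ∫⁻ y in Ioi 0, (Ioi t).indicator w y * (Ioi 0).indicator h t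
            = (Ioi 0).indicator (fun t => (∫⁻ y in Ioi t, w y) * h t) t := by
          intro t
          rw [lintegral_mul_const _ (hw.indicator measurableSet_Ioi),
            lintegral_indicator measurableSet_Ioi, Measure.restrict_restrict measurableSet_Ioi]
          by_cases ht : 0 < t
          · rw [inter_eq_left.mpr (Ioi_subset_Ioi ht.le), indicator_of_mem (mem_Ioi.2 ht),
              indicator_of_mem (mem_Ioi.2 ht)]
          · have ht' : t ∉ Ioi 0 := ht
            rw [indicator_of_notMem ht', indicator_of_notMem ht', mul_zero]
        simp_rw [hinner, lintegral_indicator measurableSet_Ioi]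

theorem rpow_lintegral_Ioo_le {p α y : ℝ} (hp : 1 ≤ p) (hα : 0 < α) (hy : 0 < y)
    {g : ℝ → ℝ≥0∞} (hg : AEMeasurable g) :
    (∫⁻ t in Ioo 0 y, g t) ^ p ≤ ENNReal.ofReal ((y ^ α / α) ^ (p - 1)) *
      ∫⁻ t in Ioo 0 y, ENNReal.ofReal (t ^ ((1 - α) * (p - 1))) * g t ^ p := by
  have hp0 : 0 < p := by linarith
  have hq0 : 0 ≤ 1 - 1 / p := by rw [sub_nonneg, div_le_one hp0]; exact hp
  set F := fun t : ℝ => ENNReal.ofReal (t ^ ((1 - α) * (p - 1))) * g t ^ p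
  set G := fun t : ℝ => ENNReal.ofReal (t ^ (α - 1))
  have hsplit : ∀ t ∈ Ioo 0 y, g t = F t ^ (1 / p) * G t ^ (1 - 1 / p) := by
    intro t ht
    have hexp : (1 - α) * (p - 1) * (1 / p) + (α - 1) * (1 - 1 / p) = 0 := by field_simp; ring
    simp only [F, G]
    rw [ENNReal.mul_rpow_of_nonneg _ _ (by positivity), ← ENNReal.rpow_mul,
      mul_one_div_cancel hp0.ne', ENNReal.rpow_one,
      ENNReal.ofReal_rpow_of_pos (Real.rpow_pos_of_pos ht.1 _), ← Real.rpow_mul ht.1.le,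
      ENNReal.ofReal_rpow_of_pos (Real.rpow_pos_of_pos ht.1 _), ← Real.rpow_mul ht.1.le,
      mul_right_comm, ← ENNReal.ofReal_mul (Real.rpow_nonneg ht.1.le _), ← Real.rpow_add ht.1,
      hexp, Real.rpow_zero, ENNReal.ofReal_one, one_mul]
  have hG : ∫⁻ t in Ioo 0 y, G t = ENNReal.ofReal (y ^ α / α) := by
    simpa using lintegral_Ioo_zero_rpow hy (r := α - 1) (by linarith)
  have hF : AEMeasurable F (volume.restrict (Ioo 0 y)) := by fun_prop
  calc (∫⁻ t in Ioo 0 y, g t) ^ p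
      = (∫⁻ t in Ioo 0 y, F t ^ (1 / p) * G t ^ (1 - 1 / p)) ^ p := by
        rw [setLIntegral_congr_fun measurableSet_Ioo hsplit]
    _ ≤ ((∫⁻ t in Ioo 0 y, F t) ^ (1 / p) *
          (∫⁻ t in Ioo 0 y, G t) ^ (1 - 1 / p)) ^ p := by
        gcongr
        exact ENNReal.lintegral_mul_norm_pow_le hF (by fun_prop) (by positivity) hq0 (by ring)
    _ = ENNReal.ofReal ((y ^ α / α) ^ (p - 1)) * ∫⁻ t in Ioo 0 y, F t := by
        rw [ENNReal.mul_rpow_of_nonneg _ _ hp0.le, ← ENNReal.rpow_mul, ← ENNReal.rpow_mul,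
          one_div_mul_cancel hp0.ne', ENNReal.rpow_one, hG,
          ENNReal.ofReal_rpow_of_nonneg (by positivity) (mul_nonneg hq0 hp0.le), mul_comm]
        congr 3
        field_simp

theorem lintegral_rpow_mul_rpow_lintegral_Ioo_le {p δ : ℝ} (hp : 1 ≤ p)
    (hδp : 1 < (δ + 1) * p) {g : ℝ → ℝ≥0∞} (hg : Measurable g) :
    ∫⁻ y in Ioi 0, ENNReal.ofReal (y ^ (-((δ + 1) * p))) * (∫⁻ t in Ioo 0 y, g t) ^ p
      ≤ ENNReal.ofReal ((p / ((δ + 1) * p - 1)) ^ p) *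
        ∫⁻ t in Ioi 0, ENNReal.ofReal (t ^ (-(δ * p))) * g t ^ p := by
  have hp0 : 0 < p := by linarith
  set α := ((δ + 1) * p - 1) / p with hα_def
  have hα : 0 < α := div_pos (by linarith) hp0
  set h := fun t : ℝ => ENNReal.ofReal (t ^ ((1 - α) * (p - 1))) * g t ^ p
  have hh : Measurable h := by fun_prop
  have hweight : ∀ y > 0, y ^ (-((δ + 1) * p)) * (y ^ α / α) ^ (p - 1)
      = α ^ (1 - p) * y ^ (-α - 1) := by
    intro y hy
    have hexp : -((δ + 1) * p) + α * (p - 1) = -α - 1 := by rw [hα_def]; field_simp; ring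
    rw [Real.div_rpow (by positivity) hα.le, ← Real.rpow_mul hy.le, ← hexp, Real.rpow_add hy,
      ← neg_sub p 1, Real.rpow_neg hα.le]
    ring
  have hinner : ∀ t > 0, ENNReal.ofReal (t ^ (-α) / α) * h t
      = ENNReal.ofReal (α⁻¹) * (ENNReal.ofReal (t ^ (-(δ * p))) * g t ^ p) := by
    intro t ht
    have hexp : -α + (1 - α) * (p - 1) = -(δ * p) := by rw [hα_def]; field_simp; ring
    rw [← mul_assoc, ← ENNReal.ofReal_mul (by positivity), div_mul_eq_mul_div,
      ← Real.rpow_add ht, hexp, div_eq_inv_mul, ENNReal.ofReal_mul (by positivity), mul_assoc]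
  calc ∫⁻ y in Ioi 0, ENNReal.ofReal (y ^ (-((δ + 1) * p))) * (∫⁻ t in Ioo 0 y, g t) ^ p
      ≤ ∫⁻ y in Ioi 0, ENNReal.ofReal (y ^ (-((δ + 1) * p))) *
          (ENNReal.ofReal ((y ^ α / α) ^ (p - 1)) * ∫⁻ t in Ioo 0 y, h t) := by
        refine setLIntegral_mono' measurableSet_Ioi fun y hy => ?_
        gcongr
        exact rpow_lintegral_Ioo_le hp hα hy hg.aemeasurable
    _ = ENNReal.ofReal (α ^ (1 - p)) *
          ∫⁻ y in Ioi 0, ENNReal.ofReal (y ^ (-α - 1)) * ∫⁻ t in Ioo 0 y, h t := by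
        rw [← lintegral_const_mul' _ _ ENNReal.ofReal_ne_top]
        refine setLIntegral_congr_fun measurableSet_Ioi fun y hy => ?_
        rw [← mul_assoc, ← ENNReal.ofReal_mul (Real.rpow_nonneg (le_of_lt hy) _), hweight y hy,
          ENNReal.ofReal_mul (by positivity), mul_assoc]
    _ = ENNReal.ofReal (α ^ (1 - p)) *
          ∫⁻ t in Ioi 0, ENNReal.ofReal (t ^ (-α) / α) * h t := by
        rw [lintegral_Ioi_mul_lintegral_Ioo (by fun_prop) hh]
        congr 1
        refine setLIntegral_congr_fun measurableSet_Ioi fun t ht => ?_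
        rw [lintegral_Ioi_rpow ht (by linarith), show -α - 1 + 1 = -α by ring, neg_neg]
    _ = ENNReal.ofReal ((p / ((δ + 1) * p - 1)) ^ p) *
          ∫⁻ t in Ioi 0, ENNReal.ofReal (t ^ (-(δ * p))) * g t ^ p := by
        rw [setLIntegral_congr_fun measurableSet_Ioi hinner,
          lintegral_const_mul' _ _ ENNReal.ofReal_ne_top, ← mul_assoc,
          ← ENNReal.ofReal_mul (by positivity), ← Real.rpow_neg_one, ← Real.rpow_add hα,
          show 1 - p + -1 = -p by ring, Real.rpow_neg hα.le, ← Real.inv_rpow hα.le, hα_def,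
          inv_div]

theorem lintegral_rpow_mul_abs_rpow_le_of_contDiff {p δ : ℝ} (hp : 1 ≤ p)
    (hδp : 1 < (δ + 1) * p) {f : ℝ → ℝ} (hf : ContDiff ℝ 1 f) (hf0 : f 0 = 0) :
    ∫⁻ y in Ioi 0, ENNReal.ofReal (y ^ (-((δ + 1) * p)) * |f y| ^ p)
      ≤ ENNReal.ofReal ((p / ((δ + 1) * p - 1)) ^ p) *
        ∫⁻ y in Ioi 0, ENNReal.ofReal (y ^ (-(δ * p)) * |deriv f y| ^ p) := by
  have hp0 : 0 < p := by linarith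
  have hofReal_mul : ∀ r : ℝ, ∀ y ∈ Ioi (0 : ℝ), ∀ a : ℝ,
      ENNReal.ofReal (y ^ r * |a| ^ p) = ENNReal.ofReal (y ^ r) * ‖a‖ₑ ^ p := by
    intro r y hy a
    rw [ENNReal.ofReal_mul (Real.rpow_nonneg (le_of_lt hy) r),
      ← ENNReal.ofReal_rpow_of_nonneg (abs_nonneg a) hp0.le, Real.enorm_eq_ofReal_abs]
  have hftc : ∀ y ∈ Ioi (0 : ℝ), ‖f y‖ₑ ≤ ∫⁻ t in Ioo 0 y, ‖deriv f t‖ₑ := by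
    intro y hy
    simpa [hf0, restrict_Ioo_eq_restrict_Icc] using
      enorm_sub_le_lintegral_deriv_of_contDiffOn_Icc hf.contDiffOn (le_of_lt hy)
  have hderiv : Measurable fun t => ‖deriv f t‖ₑ :=
    (hf.continuous_deriv le_rfl).measurable.enorm
  calc ∫⁻ y in Ioi 0, ENNReal.ofReal (y ^ (-((δ + 1) * p)) * |f y| ^ p)
      = ∫⁻ y in Ioi 0, ENNReal.ofReal (y ^ (-((δ + 1) * p))) * ‖f y‖ₑ ^ p :=
        setLIntegral_congr_fun measurableSet_Ioi fun y hy => hofReal_mul _ y hy _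
    _ ≤ ∫⁻ y in Ioi 0, ENNReal.ofReal (y ^ (-((δ + 1) * p))) *
          (∫⁻ t in Ioo 0 y, ‖deriv f t‖ₑ) ^ p :=
        setLIntegral_mono' measurableSet_Ioi fun y hy => by gcongr; exact hftc y hy
    _ ≤ ENNReal.ofReal ((p / ((δ + 1) * p - 1)) ^ p) *
          ∫⁻ t in Ioi 0, ENNReal.ofReal (t ^ (-(δ * p))) * ‖deriv f t‖ₑ ^ p :=
        lintegral_rpow_mul_rpow_lintegral_Ioo_le hp hδp hderiv
    _ = ENNReal.ofReal ((p / ((δ + 1) * p - 1)) ^ p) *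
          ∫⁻ y in Ioi 0, ENNReal.ofReal (y ^ (-(δ * p)) * |deriv f y| ^ p) := by
        rw [setLIntegral_congr_fun measurableSet_Ioi fun y hy => hofReal_mul _ y hy _]

theorem setLIntegral_snd_pos_eq_lintegral_Ioi {E : Type*} [MeasureSpace E]
    [SFinite (volume : Measure E)] {f : E × ℝ → ℝ≥0∞} (hf : Measurable f) :
    ∫⁻ z in {z : E × ℝ | 0 < z.2}, f z = ∫⁻ x, ∫⁻ y in Ioi 0, f (x, y) := by
  rw [show {z : E × ℝ | 0 < z.2} = univ ×ˢ Ioi 0 by ext; simp, Measure.volume_eq_prod,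
    setLIntegral_prod f hf.aemeasurable, Measure.restrict_univ]

theorem deriv_comp_prodMk_right {E F : Type*} [NormedAddCommGroup E] [NormedSpace ℝ E]
    [NormedAddCommGroup F] [NormedSpace ℝ F] {u : E × ℝ → F} {x : E} {t : ℝ}
    (hu : DifferentiableAt ℝ u (x, t)) :
    deriv (fun s => u (x, s)) t = fderiv ℝ u (x, t) (0, 1) :=
  (hu.hasFDerivAt.comp_hasDerivAt t ((hasDerivAt_const t x).prodMk (hasDerivAt_id t))).deriv

theorem weighted_hardy_halfspace_C1_general (n : ℕ) (p δ : ℝ)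
    (hp : 1 < p) (hδ : 0 ≤ δ)
    (u : EuclideanSpace ℝ (Fin (n - 1)) × ℝ → ℝ)
    (hu : ContDiff ℝ 1 u)
    (h0 : ∀ x : EuclideanSpace ℝ (Fin (n - 1)), u (x, 0) = 0) :
    ∫⁻ z in {z : EuclideanSpace ℝ (Fin (n - 1)) × ℝ | 0 < z.2},
        ENNReal.ofReal (z.2 ^ (-((δ + 1) * p)) * |u z| ^ p) ∂volume
      ≤ ENNReal.ofReal ((p / ((δ + 1) * p - 1)) ^ p) *
        ∫⁻ z in {z : EuclideanSpace ℝ (Fin (n - 1)) × ℝ | 0 < z.2},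
          ENNReal.ofReal (z.2 ^ (-(δ * p)) *
            |fderiv ℝ u z ((0 : EuclideanSpace ℝ (Fin (n - 1))), (1 : ℝ))| ^ p) ∂volume := by
  have hδp : 1 < (δ + 1) * p := by nlinarith
  have hum : Measurable u := hu.continuous.measurable
  have hdum : Measurable fun z =>
      fderiv ℝ u z ((0 : EuclideanSpace ℝ (Fin (n - 1))), (1 : ℝ)) :=
    ((hu.continuous_fderiv one_ne_zero).clm_apply continuous_const).measurable
  rw [setLIntegral_snd_pos_eq_lintegral_Ioi (by fun_prop),
    setLIntegral_snd_pos_eq_lintegral_Ioi (by fun_prop),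
    ← lintegral_const_mul' _ _ ENNReal.ofReal_ne_top]
  refine lintegral_mono fun x => ?_
  have hux : ContDiff ℝ 1 fun s => u (x, s) := hu.comp (contDiff_prodMk_right x)
  simpa only [deriv_comp_prodMk_right (hu.differentiable one_ne_zero _)] using
    lintegral_rpow_mul_abs_rpow_le_of_contDiff hp.le hδp hux (h0 x)

/-- A `C¹` function on the half-space `ℝ^{n-1} × (0,∞)` with vanishing boundary trace and
`u, ∇u ∈ L^p`, `y^{-δ} ∂_y u ∈ L^p` gains one full power of boundary decay:
`∫ y^{-(δ+1)p} |u|^p ≤ (p/((δ+1)p-1))^p ∫ y^{-δp} |∂_y u|^p`. -/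
theorem weighted_hardy_halfspace_C1 (n : ℕ) (hn : 1 ≤ n) (p δ : ℝ)
    (hp : 1 < p) (hδ : 0 ≤ δ)
    (u : EuclideanSpace ℝ (Fin (n - 1)) × ℝ → ℝ)
    (hu : ContDiff ℝ 1 u)
    (h0 : ∀ x : EuclideanSpace ℝ (Fin (n - 1)), u (x, 0) = 0)
    (hu_int : ∫⁻ z in {z : EuclideanSpace ℝ (Fin (n - 1)) × ℝ | 0 < z.2},
        ENNReal.ofReal (|u z| ^ p) ∂volume < ⊤)
    (hgrad_int : ∫⁻ z in {z : EuclideanSpace ℝ (Fin (n - 1)) × ℝ | 0 < z.2},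
        ENNReal.ofReal ((euclGradNorm (n - 1) u z) ^ p) ∂volume < ⊤)
    (hdy_int : ∫⁻ z in {z : EuclideanSpace ℝ (Fin (n - 1)) × ℝ | 0 < z.2},
        ENNReal.ofReal (z.2 ^ (-(δ * p)) *
          |fderiv ℝ u z ((0 : EuclideanSpace ℝ (Fin (n - 1))), (1 : ℝ))| ^ p) ∂volume < ⊤) :
    ∫⁻ z in {z : EuclideanSpace ℝ (Fin (n - 1)) × ℝ | 0 < z.2},
        ENNReal.ofReal (z.2 ^ (-((δ + 1) * p)) * |u z| ^ p) ∂volume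
      ≤ ENNReal.ofReal ((p / ((δ + 1) * p - 1)) ^ p) *
        ∫⁻ z in {z : EuclideanSpace ℝ (Fin (n - 1)) × ℝ | 0 < z.2},
          ENNReal.ofReal (z.2 ^ (-(δ * p)) *
            |fderiv ℝ u z ((0 : EuclideanSpace ℝ (Fin (n - 1))), (1 : ℝ))| ^ p) ∂volume :=
  weighted_hardy_halfspace_C1_general n p δ hp hδ u hu h0
end

section
/- Let n ≥ 1 be an integer, 1 < p < ∞, h > 0, and let V ⊆ ℝ^{n−1} be a measurable set. If u : ℝ^{n−1} × ℝ → ℝ is continuously differentiable and u(x,0) = 0 for every x ∈ V, then ∫_{V×(0,h)} |u(x,y)|^p dx dy ≤ (h^p / p) · ∫_{V×(0,h)} |∂_y u(x,y)|^p dx dy, as an inequality in [0,∞]. -/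
/-! On each vertical segment, `u(x, y) = ∫₀ʸ ∂_y u(x, t) dt` and Hölder's inequality give
`|u(x, y)|^p ≤ y^(p-1) ∫₀ʰ |∂_y u(x, t)|^p dt`; integrating `y^(p-1)` over `(0, h)` produces
`h^p / p`, and Tonelli's theorem integrates the resulting bound over `V`. -/

open MeasureTheory Set
open scoped ENNReal

theorem lintegral_rpow_le_measure_univ_rpow_mul {α : Type*} [MeasurableSpace α] (μ : Measure α)
    {p : ℝ} (hp : 1 < p) {f : α → ℝ≥0∞} (hf : AEMeasurable f μ) :
    (∫⁻ a, f a ∂μ) ^ p ≤ μ univ ^ (p - 1) * ∫⁻ a, f a ^ p ∂μ := by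
  obtain ⟨q, hpq⟩ : ∃ q, p.HolderConjugate q := ⟨_, .conjExponent hp⟩
  have holder := ENNReal.lintegral_mul_le_Lp_mul_Lq μ hpq hf (aemeasurable_const (b := 1))
  simp only [Pi.mul_apply, mul_one, ENNReal.one_rpow, lintegral_const, one_mul] at holder
  calc (∫⁻ a, f a ∂μ) ^ p ≤ ((∫⁻ a, f a ^ p ∂μ) ^ (1 / p) * μ univ ^ (1 / q)) ^ p := by
        gcongr
    _ = μ univ ^ (p - 1) * ∫⁻ a, f a ^ p ∂μ := by
      rw [ENNReal.mul_rpow_of_nonneg _ _ hpq.nonneg, ← ENNReal.rpow_mul, ← ENNReal.rpow_mul,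
        one_div_mul_cancel hpq.ne_zero, ENNReal.rpow_one, mul_comm, one_div, inv_mul_eq_div,
        hpq.div_conj_eq_sub_one]

theorem lintegral_Ioo_ofReal_rpow_sub_one {p h : ℝ} (hp : 0 < p) (hh : 0 ≤ h) :
    ∫⁻ y in Ioo 0 h, ENNReal.ofReal y ^ (p - 1) = ENNReal.ofReal (h ^ p / p) := by
  have hp1 : -1 < p - 1 := by linarith
  rw [setLIntegral_congr_fun measurableSet_Ioo fun y hy =>
      ENNReal.ofReal_rpow_of_pos hy.1, restrict_Ioo_eq_restrict_Ioc,
    ← ofReal_integral_eq_lintegral_ofReal, ← intervalIntegral.integral_of_le hh,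
    integral_rpow (.inl hp1), sub_add_cancel, Real.zero_rpow hp.ne', sub_zero]
  · exact (intervalIntegrable_iff_integrableOn_Ioc_of_le hh).mp
      (intervalIntegral.intervalIntegrable_rpow' hp1)
  · filter_upwards [ae_restrict_mem measurableSet_Ioc] with y hy using
      Real.rpow_nonneg hy.1.le _

theorem enorm_le_setLIntegral_Ioo_of_hasDerivAt {f f' : ℝ → ℝ} (hf0 : f 0 = 0)
    (hderiv : ∀ t, HasDerivAt f (f' t) t) (hf' : Continuous f') {y : ℝ} (hy : 0 ≤ y) :
    ‖f y‖ₑ ≤ ∫⁻ t in Ioo 0 y, ‖f' t‖ₑ := by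
  have ftc : f y = ∫ t in Ioo 0 y, f' t := by
    rw [restrict_Ioo_eq_restrict_Ioc, ← intervalIntegral.integral_of_le hy,
      intervalIntegral.integral_eq_sub_of_hasDerivAt (fun t _ => hderiv t)
        (hf'.intervalIntegrable 0 y), hf0, sub_zero]
  exact ftc ▸ enorm_integral_le_lintegral_enorm _

theorem enorm_rpow_le_of_hasDerivAt {f f' : ℝ → ℝ} (hf0 : f 0 = 0)
    (hderiv : ∀ t, HasDerivAt f (f' t) t) (hf' : Continuous f') {p h y : ℝ} (hp : 1 < p)
    (hy : y ∈ Icc 0 h) :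
    ‖f y‖ₑ ^ p ≤ ENNReal.ofReal y ^ (p - 1) * ∫⁻ t in Ioo 0 h, ‖f' t‖ₑ ^ p :=
  calc ‖f y‖ₑ ^ p ≤ (∫⁻ t in Ioo 0 y, ‖f' t‖ₑ) ^ p := by
        gcongr
        exact enorm_le_setLIntegral_Ioo_of_hasDerivAt hf0 hderiv hf' hy.1
    _ ≤ volume (Ioo 0 y) ^ (p - 1) * ∫⁻ t in Ioo 0 y, ‖f' t‖ₑ ^ p := by
        simpa only [Measure.restrict_apply_univ] using
          lintegral_rpow_le_measure_univ_rpow_mul (volume.restrict (Ioo 0 y)) hp hf'.enorm.aemeasurable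
    _ ≤ ENNReal.ofReal y ^ (p - 1) * ∫⁻ t in Ioo 0 h, ‖f' t‖ₑ ^ p := by
        rw [Real.volume_Ioo, sub_zero]
        gcongr
        exact hy.2

theorem lintegral_Ioo_enorm_rpow_le_of_hasDerivAt {f f' : ℝ → ℝ} (hf0 : f 0 = 0)
    (hderiv : ∀ t, HasDerivAt f (f' t) t) (hf' : Continuous f') {p h : ℝ} (hp : 1 < p)
    (hh : 0 ≤ h) :
    ∫⁻ y in Ioo 0 h, ‖f y‖ₑ ^ p ≤ ENNReal.ofReal (h ^ p / p) * ∫⁻ y in Ioo 0 h, ‖f' y‖ₑ ^ p :=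
  calc ∫⁻ y in Ioo 0 h, ‖f y‖ₑ ^ p
      ≤ ∫⁻ y in Ioo 0 h, ENNReal.ofReal y ^ (p - 1) * ∫⁻ t in Ioo 0 h, ‖f' t‖ₑ ^ p :=
        setLIntegral_mono' measurableSet_Ioo fun y hy =>
          enorm_rpow_le_of_hasDerivAt hf0 hderiv hf' hp (Ioo_subset_Icc_self hy)
    _ = ENNReal.ofReal (h ^ p / p) * ∫⁻ y in Ioo 0 h, ‖f' y‖ₑ ^ p := by
        rw [lintegral_mul_const _ (ENNReal.measurable_ofReal.pow_const _),
          lintegral_Ioo_ofReal_rpow_sub_one (by linarith) hh]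

theorem DifferentiableAt.hasDerivAt_comp_prodMk_right {E F : Type*} [NormedAddCommGroup E]
    [NormedSpace ℝ E] [NormedAddCommGroup F] [NormedSpace ℝ F] {u : E × ℝ → F} {x : E} {y : ℝ}
    (hu : DifferentiableAt ℝ u (x, y)) :
    HasDerivAt (fun t => u (x, t)) (fderiv ℝ u (x, y) (0, 1)) y :=
  hu.hasFDerivAt.comp_hasDerivAt y ((hasDerivAt_const y x).prodMk (hasDerivAt_id y))

theorem poincare_box_general (n : ℕ) (p h : ℝ) (hp : 1 < p) (hh : 0 < h)
    (V : Set (EuclideanSpace ℝ (Fin (n - 1))))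
    (u : EuclideanSpace ℝ (Fin (n - 1)) × ℝ → ℝ)
    (hu : ContDiff ℝ 1 u)
    (h0 : ∀ x ∈ V, u (x, 0) = 0) :
    ∫⁻ z in V ×ˢ Set.Ioo (0 : ℝ) h, ENNReal.ofReal (|u z| ^ p) ∂volume
      ≤ ENNReal.ofReal (h ^ p / p) *
        ∫⁻ z in V ×ˢ Set.Ioo (0 : ℝ) h,
          ENNReal.ofReal
            (|fderiv ℝ u z ((0 : EuclideanSpace ℝ (Fin (n - 1))), (1 : ℝ))| ^ p) ∂volume := by
  set g := fun z => fderiv ℝ u z ((0 : EuclideanSpace ℝ (Fin (n - 1))), (1 : ℝ))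
  have hg : Continuous g := (hu.continuous_fderiv one_ne_zero).clm_apply continuous_const
  have ofReal_eq (v : ℝ) : ENNReal.ofReal (|v| ^ p) = ‖v‖ₑ ^ p := by
    rw [Real.enorm_eq_ofReal_abs, ENNReal.ofReal_rpow_of_nonneg (abs_nonneg v) (by linarith)]
  simp only [ofReal_eq]
  rw [Measure.volume_eq_prod, ← Measure.prod_restrict,
    lintegral_prod _ (hu.continuous.measurable.enorm.pow_const p).aemeasurable,
    lintegral_prod _ (hg.measurable.enorm.pow_const p).aemeasurable,
    ← lintegral_const_mul' _ _ ENNReal.ofReal_ne_top]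
  refine setLIntegral_mono ?_ fun x hx => ?_
  · exact ((hg.measurable.enorm.pow_const p).lintegral_prod_right').const_mul _
  · exact lintegral_Ioo_enorm_rpow_le_of_hasDerivAt (h0 x hx)
      (fun y => (hu.differentiable one_ne_zero _).hasDerivAt_comp_prodMk_right)
      (hg.comp (.prodMk_right x)) hp hh.le

/-- **Poincaré inequality with explicit constant on boundary boxes**: if `u` is `C¹` on
`ℝ^{n-1} × ℝ` and vanishes on `V × {0}`, then
`∫_{V×(0,h)} |u|^p ≤ (h^p/p) ∫_{V×(0,h)} |∂_y u|^p`, as an inequality in `[0,∞]`. -/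
theorem poincare_box (n : ℕ) (hn : 1 ≤ n) (p h : ℝ) (hp : 1 < p) (hh : 0 < h)
    (V : Set (EuclideanSpace ℝ (Fin (n - 1)))) (hV : MeasurableSet V)
    (u : EuclideanSpace ℝ (Fin (n - 1)) × ℝ → ℝ)
    (hu : ContDiff ℝ 1 u)
    (h0 : ∀ x ∈ V, u (x, 0) = 0) :
    ∫⁻ z in V ×ˢ Set.Ioo (0 : ℝ) h, ENNReal.ofReal (|u z| ^ p) ∂volume
      ≤ ENNReal.ofReal (h ^ p / p) *
        ∫⁻ z in V ×ˢ Set.Ioo (0 : ℝ) h,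
          ENNReal.ofReal
            (|fderiv ℝ u z ((0 : EuclideanSpace ℝ (Fin (n - 1))), (1 : ℝ))| ^ p) ∂volume :=
  poincare_box_general n p h hp hh V u hu h0
end

section
/- Let k ≥ 1 and ℓ ≥ 0 be integers and let u : ℝ → ℝ be smooth (C^∞). Define F(y) = (y^ℓ/ℓ!) · S_k(u)(y). Then for every integer j with 0 ≤ j ≤ k + ℓ − 1: if j ≠ ℓ then F^{(j)}(0) = 0, while for j = ℓ one has F^{(ℓ)}(0) = u(0). -/
/-!
Write `F = (y^ℓ/ℓ!) · S` with `S = S_k(u)`. The only nonzero derivative of `y^ℓ/ℓ!` at `0` is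
the `ℓ`-th, equal to `1`, so Leibniz' rule gives `F^{(j)}(0) = C(j, ℓ) · S^{(j-ℓ)}(0)`.
Now `S(0) = u(0)`, and the derivative of `S` telescopes to
`S' = (y^{k-1}/(k-1)!) · (-1)^{k-1} u^{(k)}`, which vanishes to order `k - 1` at `0`;
the same Leibniz computation then gives `S^{(n)}(0) = 0` for `1 ≤ n ≤ k - 1`.
-/

open scoped ContDiff

variable {𝕜 : Type*} [NontriviallyNormedField 𝕜]

theorem ContDiff.iteratedDeriv {u : 𝕜 → 𝕜} (hu : ContDiff 𝕜 ∞ u) (i : ℕ) :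
    ContDiff 𝕜 ∞ (iteratedDeriv i u) := by
  rw [iteratedDeriv_eq_iterate]
  exact hu.iterate_deriv i

theorem iteratedDeriv_pow_div_factorial_mul_apply_zero [CharZero 𝕜] {g : 𝕜 → 𝕜} {n : ℕ}
    (hg : ContDiffAt 𝕜 n g 0) (p : ℕ) :
    iteratedDeriv n (fun y => y ^ p / p.factorial * g y) 0 =
      n.choose p * iteratedDeriv (n - p) g 0 := by
  have hmonomial (i : ℕ) :
      iteratedDeriv i (fun y : 𝕜 => y ^ p / p.factorial) 0 = if i = p then 1 else 0 := by
    simp only [div_eq_mul_inv, iteratedDeriv_mul_const_field, iteratedDeriv_fun_pow_zero]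
    split_ifs <;> simp [Nat.factorial_ne_zero]
  rw [iteratedDeriv_fun_mul (by fun_prop) hg]
  simp only [hmonomial, mul_ite, mul_one, mul_zero, ite_mul, zero_mul, Finset.sum_ite_eq',
    Finset.mem_range]
  split_ifs with hp
  · rfl
  · rw [Nat.choose_eq_zero_of_lt (by omega), Nat.cast_zero, zero_mul]

/-- The operator `S_k` of the paper. -/
noncomputable def boundaryCorrection (k : ℕ) (u : 𝕜 → 𝕜) (y : 𝕜) : 𝕜 :=
  ∑ i ∈ Finset.range k, ((-1 : 𝕜) ^ i * y ^ i / i.factorial) * iteratedDeriv i u y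

theorem boundaryCorrection_apply_zero {k : ℕ} (hk : 0 < k) (u : 𝕜 → 𝕜) :
    boundaryCorrection k u 0 = u 0 := by
  rw [boundaryCorrection, Finset.sum_eq_single_of_mem 0 (Finset.mem_range.2 hk)]
  · simp
  · intro i _ hi
    simp [zero_pow hi]

theorem hasDerivAt_boundaryCorrection_succ [CharZero 𝕜] {k : ℕ} {u : 𝕜 → 𝕜}
    (hu : ContDiff 𝕜 (k + 1) u) (y : 𝕜) :
    HasDerivAt (boundaryCorrection (k + 1) u)
      (y ^ k / k.factorial * ((-1) ^ k * iteratedDeriv (k + 1) u y)) y := by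
  have hasDerivAt_iteratedDeriv {i : ℕ} (hi : i ≤ k) (y : 𝕜) :
      HasDerivAt (iteratedDeriv i u) (iteratedDeriv (i + 1) u y) y := by
    rw [iteratedDeriv_succ]
    exact (hu.differentiable_iteratedDeriv i (by exact_mod_cast Nat.lt_succ_of_le hi) y).hasDerivAt
  induction k with
  | zero =>
    have hone : boundaryCorrection 1 u = u := funext fun y => by simp [boundaryCorrection]
    simpa [hone] using hasDerivAt_iteratedDeriv le_rfl y
  | succ k ih =>
    have hterm := (((hasDerivAt_pow (k + 1) y).const_mul ((-1 : 𝕜) ^ (k + 1))).div_const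
      ((k + 1).factorial : 𝕜)).mul (hasDerivAt_iteratedDeriv le_rfl y)
    have hsum := (ih (hu.of_le (by norm_cast; omega))
      fun hi => hasDerivAt_iteratedDeriv (Nat.le_succ_of_le hi)).add hterm
    unfold boundaryCorrection
    simp_rw [Finset.sum_range_succ _ (k + 1)]
    refine hsum.congr_deriv ?_
    rw [Nat.factorial_succ]
    push_cast
    field_simp
    ring

theorem contDiff_boundaryCorrection {u : 𝕜 → 𝕜} (hu : ContDiff 𝕜 ∞ u) (k : ℕ) :
    ContDiff 𝕜 ∞ (boundaryCorrection k u) := by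
  have hderiv (i : ℕ) : ContDiff 𝕜 ∞ (iteratedDeriv i u) := hu.iteratedDeriv i
  unfold boundaryCorrection
  fun_prop

theorem iteratedDeriv_boundaryCorrection_apply_zero [CharZero 𝕜] {k n : ℕ} {u : 𝕜 → 𝕜}
    (hu : ContDiff 𝕜 ∞ u) (hn₀ : n ≠ 0) (hnk : n < k) :
    iteratedDeriv n (boundaryCorrection k u) 0 = 0 := by
  obtain ⟨m, rfl⟩ := Nat.exists_eq_succ_of_ne_zero hn₀
  obtain ⟨K, rfl⟩ : ∃ K, k = K + 1 := ⟨k - 1, by omega⟩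
  have hderiv : deriv (boundaryCorrection (K + 1) u) =
      fun y => y ^ K / K.factorial * ((-1) ^ K * iteratedDeriv (K + 1) u y) :=
    funext fun y =>
      (hasDerivAt_boundaryCorrection_succ (hu.of_le (by exact_mod_cast le_top)) y).deriv
  have hsmooth : ContDiffAt 𝕜 m (fun y => (-1) ^ K * iteratedDeriv (K + 1) u y) 0 :=
    (contDiff_const.mul (hu.iteratedDeriv (K + 1))).contDiffAt.of_le (by exact_mod_cast le_top)
  rw [iteratedDeriv_succ', hderiv, iteratedDeriv_pow_div_factorial_mul_apply_zero hsmooth,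
    Nat.choose_eq_zero_of_lt (by omega), Nat.cast_zero, zero_mul]

/-- Jet identity at the boundary for `F(y) = (y^ℓ/ℓ!)·S_k(u)(y)`, where
`S_k(u)(y) = ∑_{j=0}^{k-1} ((-1)^j y^j / j!) u^{(j)}(y)` and `u` is smooth:
for `0 ≤ j ≤ k+ℓ-1` with `j ≠ ℓ` one has `F^{(j)}(0) = 0`, and `F^{(ℓ)}(0) = u(0)`. -/
theorem jets_boundary_correction (k l : ℕ) (hk : 1 ≤ k) (u : ℝ → ℝ)
    (hu : ContDiff ℝ (⊤ : ℕ∞) u) :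
    (∀ j : ℕ, j ≤ k + l - 1 → j ≠ l →
      iteratedDeriv j
        (fun y : ℝ => (y ^ l / (Nat.factorial l : ℝ)) *
          ∑ i ∈ Finset.range k,
            ((-1 : ℝ) ^ i * y ^ i / (Nat.factorial i : ℝ)) * iteratedDeriv i u y) 0 = 0) ∧
    iteratedDeriv l
      (fun y : ℝ => (y ^ l / (Nat.factorial l : ℝ)) *
        ∑ i ∈ Finset.range k,
          ((-1 : ℝ) ^ i * y ^ i / (Nat.factorial i : ℝ)) * iteratedDeriv i u y) 0 = u 0 := by
  let F := fun y : ℝ => y ^ l / l.factorial * boundaryCorrection k u y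
  change (∀ j, j ≤ k + l - 1 → j ≠ l → iteratedDeriv j F 0 = 0) ∧ iteratedDeriv l F 0 = u 0
  have hjet (j : ℕ) : iteratedDeriv j F 0 =
      j.choose l * iteratedDeriv (j - l) (boundaryCorrection k u) 0 :=
    iteratedDeriv_pow_div_factorial_mul_apply_zero
      ((contDiff_boundaryCorrection hu k).contDiffAt.of_le (by exact_mod_cast le_top)) l
  refine ⟨fun j hjk hjl => ?_, ?_⟩
  · rw [hjet]
    rcases hjl.lt_or_gt with hlt | hgt
    · rw [Nat.choose_eq_zero_of_lt hlt, Nat.cast_zero, zero_mul]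
    · rw [iteratedDeriv_boundaryCorrection_apply_zero hu (by omega) (by omega), mul_zero]
  · rw [hjet, Nat.choose_self, Nat.sub_self, iteratedDeriv_zero, boundaryCorrection_apply_zero hk,
      Nat.cast_one, one_mul]
end

section
/- Let n ≥ 1 and d ≥ 0 be integers, s ∈ ℝ, and 1 < p < ∞. The following are equivalent: (i) 𝒮^{s,p}_d is nonempty; (ii) (d/2, 2) ∈ 𝒮^{s,p}_d; (iii) s ≥ d/2 and 1/p − s/n ≤ 1/2 − (d/2)/n. Moreover, when these hold, both (s, p) ∈ 𝒮^{s,p}_d and (d − s, p*) ∈ 𝒮^{s,p}_d, where p* is defined by 1/p + 1/p* = 1. -/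
/-- The set of compatible Sobolev indices `𝒮^{s,p}_d`: pairs `(σ,q)` with `q ∈ (1,∞)`,
`d - s ≤ σ ≤ s` and `1/p - s/n ≤ 1/q - σ/n ≤ (1 - 1/p) - (d-s)/n`. -/
def compatSobolevIndices (n d : ℕ) (s p : ℝ) : Set (ℝ × ℝ) :=
  {σq | 1 < σq.2 ∧ (d : ℝ) - s ≤ σq.1 ∧ σq.1 ≤ s ∧
    1 / p - s / n ≤ 1 / σq.2 - σq.1 / n ∧
    1 / σq.2 - σq.1 / n ≤ (1 - 1 / p) - ((d : ℝ) - s) / n}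

/-- `𝒮^{s,p}_d` is nonempty iff it contains `(d/2,2)` iff the weak `L²` condition
`s ≥ d/2` and `1/p - s/n ≤ 1/2 - (d/2)/n` holds; and in that case it contains
`(s,p)` and `(d-s,p*)`, where `1/p + 1/p* = 1`. -/
theorem compatSobolevIndices_nonempty_iff (n d : ℕ) (hn : 1 ≤ n) (s p : ℝ) (hp : 1 < p) :
    ((compatSobolevIndices n d s p).Nonempty ↔
      ((d : ℝ) / 2, (2 : ℝ)) ∈ compatSobolevIndices n d s p) ∧
    ((compatSobolevIndices n d s p).Nonempty ↔
      ((d : ℝ) / 2 ≤ s ∧ 1 / p - s / n ≤ 1 / 2 - ((d : ℝ) / 2) / n)) ∧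
    ((compatSobolevIndices n d s p).Nonempty →
      (s, p) ∈ compatSobolevIndices n d s p ∧
      ∀ pstar : ℝ, 1 / p + 1 / pstar = 1 →
        ((d : ℝ) - s, pstar) ∈ compatSobolevIndices n d s p) := by
  have hn' : (0 : ℝ) < n := by positivity
  have hp0 : (0 : ℝ) < p := lt_trans one_pos hp
  have hp1 : 1 / p < 1 := by rw [div_lt_one hp0]; exact hp
  have hp1' : 0 < 1 / p := by positivity
  have e1 : ((d : ℝ) - s) / n = (d : ℝ) / n - s / n := sub_div _ _ _
  have e2 : ((d : ℝ) / 2) / n = ((d : ℝ) / n) / 2 := div_right_comm _ _ _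
  -- key: nonempty → weak L² condition
  have key : (compatSobolevIndices n d s p).Nonempty →
      ((d : ℝ) / 2 ≤ s ∧ 1 / p - s / n ≤ 1 / 2 - ((d : ℝ) / 2) / n) := by
    rintro ⟨⟨σ, q⟩, hq, h1, h2, h3, h4⟩
    simp only at h1 h2 h3 h4
    rw [e1] at h4
    rw [e2]
    constructor
    · linarith
    · linarith
  -- weak L² condition → (d/2,2) ∈ 𝒮
  have mem2 : ((d : ℝ) / 2 ≤ s ∧ 1 / p - s / n ≤ 1 / 2 - ((d : ℝ) / 2) / n) →
      ((d : ℝ) / 2, (2 : ℝ)) ∈ compatSobolevIndices n d s p := by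
    rintro ⟨hs, hw⟩
    rw [e2] at hw
    simp only [compatSobolevIndices, Set.mem_setOf_eq, e1, e2]
    norm_num
    refine ⟨by linarith, hs, by linarith [one_div p], by linarith [one_div p]⟩
  refine ⟨⟨fun h => mem2 (key h), fun h => ⟨_, h⟩⟩,
    ⟨fun h => key h, fun h => ⟨_, mem2 h⟩⟩, fun h => ?_⟩
  obtain ⟨hs, hw⟩ := key h
  rw [e2] at hw
  constructor
  · simp only [compatSobolevIndices, Set.mem_setOf_eq, e1]
    refine ⟨hp, by linarith, le_refl s, le_refl _, by linarith⟩
  · intro pstar hps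
    have hps0 : 0 < 1 / pstar := by linarith
    have hps1 : 1 / pstar < 1 := by linarith
    have hpstar0 : 0 < pstar := by
      by_contra hnp
      push_neg at hnp
      have : 1 / pstar ≤ 0 := div_nonpos_of_nonneg_of_nonpos zero_le_one hnp
      linarith
    have hpstar1 : 1 < pstar := by
      rw [div_lt_one hpstar0] at hps1; exact hps1
    simp only [compatSobolevIndices, Set.mem_setOf_eq, e1]
    refine ⟨hpstar1, le_refl _, by linarith, by linarith, by linarith⟩
end

section
/- Let n ≥ 1 be an integer, let u : ℍ → ℝ be continuous, and let ψ : ℍ → ℝ be smooth with compact support contained in ℍ. Then u ∗ ψ is smooth on ℍ, and for every z = (x,y) ∈ ℍ and every 1 ≤ i ≤ n−1: y · ∂_{x_i}(u ∗ ψ)(z) = (u ∗ X_iψ)(z) and y · ∂_y(u ∗ ψ)(z) = (u ∗ X_nψ)(z), where X_iψ is the function w = (ξ,η) ↦ η · (∂ψ/∂ξ_i)(w) and X_nψ is the function w = (ξ,η) ↦ η · (∂ψ/∂η)(w). That is, ℍ-convolution intertwines the left-invariant vector fields y∂_{x_i} and y∂_y. -/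
/-!
Left translation `z ↦ w⁻¹·z` is the affine map `z ↦ w.2⁻¹ (z - (w.1, 0))`, whose derivative is
`w.2⁻¹ • id`; and `(w⁻¹·z).2 = w.2⁻¹ z.2`. Hence differentiating under the integral sign gives
`y ∂_v (u ∗ ψ) = u ∗ (η ∂_v ψ)`; this is legitimate because, for `z` near a point of `ℍ`, the
integrand is supported in a fixed compact subset `K ⊆ ℍ`, which has finite hyperbolic volume.
Since `η ∂_v ψ` is again smooth with compact support in `ℍ`, iterating the identity shows that
`u ∗ ψ` is `C^k` for every `k`.
-/

open MeasureTheory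

/-- Group multiplication on the half-space model `ℍ = ℝ^{n-1} × (0,∞)`:
`(ξ,η)·(x,y) = (ξ + ηx, ηy)`. -/
noncomputable def hyperMul (n : ℕ) (a b : EuclideanSpace ℝ (Fin (n - 1)) × ℝ) :
    EuclideanSpace ℝ (Fin (n - 1)) × ℝ :=
  (a.1 + a.2 • b.1, a.2 * b.2)

/-- Group inverse on the half-space model: `(x,y)⁻¹ = (-x/y, 1/y)`. -/
noncomputable def hyperInv (n : ℕ) (a : EuclideanSpace ℝ (Fin (n - 1)) × ℝ) :
    EuclideanSpace ℝ (Fin (n - 1)) × ℝ :=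
  ((-a.2⁻¹) • a.1, a.2⁻¹)

/-- The hyperbolic volume measure on `ℍ`, with density `y^{-n}` with respect to
Lebesgue measure on the open upper half-space. -/
noncomputable def hyperMeasure (n : ℕ) : Measure (EuclideanSpace ℝ (Fin (n - 1)) × ℝ) :=
  ((volume : Measure (EuclideanSpace ℝ (Fin (n - 1)) × ℝ)).restrict
      {z | 0 < z.2}).withDensity fun z => ENNReal.ofReal (z.2 ^ (-(n : ℝ)))

/-- The `ℍ`-convolution `(u ∗ ψ)(z) = ∫_ℍ u(w) ψ(w⁻¹·z) dμ(w)`. -/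
noncomputable def hyperConv (n : ℕ) (u ψ : EuclideanSpace ℝ (Fin (n - 1)) × ℝ → ℝ) :
    EuclideanSpace ℝ (Fin (n - 1)) × ℝ → ℝ :=
  fun z => ∫ w, u w * ψ (hyperMul n (hyperInv n w) z) ∂(hyperMeasure n)

open Metric Set Filter
open scoped ENNReal

theorem norm_le_indicator_const {α E : Type*} [NormedAddCommGroup E] {K : Set α} {w : α} {x : E}
    {C : ℝ} (hC : w ∈ K → ‖x‖ ≤ C) (h0 : w ∉ K → x = 0) :
    ‖x‖ ≤ K.indicator (fun _ => C) w := by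
  by_cases hw : w ∈ K
  · rw [indicator_of_mem hw]; exact hC hw
  · rw [indicator_of_notMem hw, h0 hw, norm_zero]

abbrev HalfSpace (n : ℕ) := EuclideanSpace ℝ (Fin (n - 1)) × ℝ

/-- The left-invariant vector field `X_v = η ∂_v` applied to `ψ`. -/
noncomputable def leftDeriv {n : ℕ} (ψ : HalfSpace n → ℝ) (v : HalfSpace n) : HalfSpace n → ℝ :=
  fun w => w.2 * fderiv ℝ ψ w v

section

variable {n : ℕ}

theorem hyperMul_hyperInv_eq_smul_sub (w z : HalfSpace n) :
    hyperMul n (hyperInv n w) z = w.2⁻¹ • (z - (w.1, 0)) := by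
  ext <;> simp [hyperMul, hyperInv, sub_eq_neg_add]

@[simp]
theorem hyperMul_hyperInv_snd (w z : HalfSpace n) :
    (hyperMul n (hyperInv n w) z).2 = w.2⁻¹ * z.2 := rfl

theorem hyperMul_hyperInv_hyperMul_hyperInv {w z : HalfSpace n} (hw : w.2 ≠ 0) (hz : z.2 ≠ 0) :
    hyperMul n z (hyperInv n (hyperMul n (hyperInv n w) z)) = w := by
  refine Prod.ext ?_ ?_
  · simp only [hyperMul, hyperInv]
    match_scalars <;> field_simp; ring
  · simp only [hyperMul, hyperInv]
    field_simp

theorem continuous_hyperMul :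
    Continuous fun q : HalfSpace n × HalfSpace n => hyperMul n q.1 q.2 := by
  unfold hyperMul; fun_prop

theorem continuousOn_hyperInv : ContinuousOn (hyperInv n) {z | z.2 ≠ 0} := by
  unfold hyperInv
  have : ContinuousOn (fun z : HalfSpace n => z.2⁻¹) {z | z.2 ≠ 0} :=
    continuousOn_snd.inv₀ fun _ hz => hz
  exact (this.neg.smul continuousOn_fst).prodMk this

theorem measurable_hyperMul_hyperInv (z : HalfSpace n) :
    Measurable fun w : HalfSpace n => hyperMul n (hyperInv n w) z := by
  simp only [hyperMul_hyperInv_eq_smul_sub]; fun_prop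

theorem hasFDerivAt_hyperMul_hyperInv (w z : HalfSpace n) :
    HasFDerivAt (hyperMul n (hyperInv n w)) (w.2⁻¹ • ContinuousLinearMap.id ℝ (HalfSpace n)) z := by
  have : hyperMul n (hyperInv n w) = fun z => w.2⁻¹ • (z - (w.1, 0)) :=
    funext (hyperMul_hyperInv_eq_smul_sub w)
  rw [this]
  exact ((hasFDerivAt_id z).sub_const ((w.1, 0) : HalfSpace n)).const_smul w.2⁻¹

theorem isOpen_setOf_snd_pos : IsOpen {z : HalfSpace n | 0 < z.2} :=
  isOpen_lt continuous_const continuous_snd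

theorem closedBall_half_subset {z₀ : HalfSpace n} (hz₀ : 0 < z₀.2) :
    closedBall z₀ (z₀.2 / 2) ⊆ {z | 0 < z.2} := by
  intro z hz
  have : |z.2 - z₀.2| ≤ z₀.2 / 2 :=
    (Real.dist_eq z.2 z₀.2 ▸ le_max_right _ _ : |z.2 - z₀.2| ≤ dist z z₀).trans
      (mem_closedBall.1 hz)
  simp only [mem_ofPred_eq]
  linarith [neg_abs_le (z.2 - z₀.2)]

theorem exists_isCompact_forall_hyperMul_hyperInv_mem {S : Set (HalfSpace n)} (hS : IsCompact S)
    (hSpos : S ⊆ {z | 0 < z.2}) {z₀ : HalfSpace n} (hz₀ : 0 < z₀.2) :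
    ∃ ε > 0, ∃ K : Set (HalfSpace n), IsCompact K ∧ K ⊆ {w | 0 < w.2} ∧
      ∀ z ∈ ball z₀ ε, ∀ w, hyperMul n (hyperInv n w) z ∈ S → w ∈ K := by
  set B := closedBall z₀ (z₀.2 / 2)
  have hB : B ⊆ {z | 0 < z.2} := closedBall_half_subset hz₀
  -- `K = B · S⁻¹`, since `w = z · (w⁻¹ · z)⁻¹`
  refine ⟨z₀.2 / 2, by positivity,
    (fun q : HalfSpace n × HalfSpace n => hyperMul n q.1 (hyperInv n q.2)) '' (B ×ˢ S), ?_, ?_, ?_⟩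
  · refine ((isCompact_closedBall _ _).prod hS).image_of_continuousOn ?_
    refine continuous_hyperMul.comp_continuousOn
      (continuousOn_fst.prodMk (continuousOn_hyperInv.comp continuousOn_snd ?_))
    exact fun q hq => (hSpos hq.2).ne'
  · rintro _ ⟨q, hq, rfl⟩
    have h1 : 0 < q.1.2 := hB hq.1
    have h2 : 0 < q.2.2 := hSpos hq.2
    exact mul_pos h1 (inv_pos.2 h2)
  · intro z hz w hw
    have hzpos : 0 < z.2 := hB (ball_subset_closedBall hz)
    have hwpos : 0 < w.2 := by
      have : 0 < w.2⁻¹ * z.2 := hSpos hw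
      exact inv_pos.1 (pos_of_mul_pos_left this hzpos.le)
    exact ⟨(z, _), ⟨ball_subset_closedBall hz, hw⟩,
      hyperMul_hyperInv_hyperMul_hyperInv hwpos.ne' hzpos.ne'⟩

theorem hyperMeasure_lt_top {K : Set (HalfSpace n)} (hK : IsCompact K)
    (hKpos : K ⊆ {z | 0 < z.2}) : hyperMeasure n K < ∞ := by
  obtain ⟨C, hC⟩ := hK.exists_bound_of_continuousOn (f := fun z : HalfSpace n => z.2 ^ (-(n : ℝ)))
    fun z hz => (continuous_snd.continuousAt.rpow_const (Or.inl (hKpos hz).ne')).continuousWithinAt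
  rw [hyperMeasure, withDensity_apply _ hK.measurableSet]
  calc ∫⁻ z in K, ENNReal.ofReal (z.2 ^ (-(n : ℝ))) ∂volume.restrict {z | 0 < z.2}
      ≤ ∫⁻ _ in K, ENNReal.ofReal C ∂volume.restrict {z | 0 < z.2} :=
        setLIntegral_mono measurable_const fun z hz =>
          ENNReal.ofReal_le_ofReal ((le_abs_self _).trans (hC z hz))
    _ < ∞ := by
        rw [setLIntegral_const]
        exact ENNReal.mul_lt_top ENNReal.ofReal_lt_top
          ((Measure.restrict_apply_le _ _).trans_lt hK.measure_lt_top)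

theorem integrable_indicator_const_hyperMeasure {K : Set (HalfSpace n)} (hK : IsCompact K)
    (hKpos : K ⊆ {z | 0 < z.2}) (c : ℝ) :
    Integrable (K.indicator fun _ => c) (hyperMeasure n) :=
  (integrable_indicator_iff hK.measurableSet).2
    (integrableOn_const (hyperMeasure_lt_top hK hKpos).ne)

variable {u ψ : HalfSpace n → ℝ}

theorem DifferentiableAt.hasFDerivAt_comp_hyperMul_hyperInv {w z : HalfSpace n}
    (hψ : DifferentiableAt ℝ ψ (hyperMul n (hyperInv n w) z)) :
    HasFDerivAt (fun z : HalfSpace n => ψ (hyperMul n (hyperInv n w) z))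
      (w.2⁻¹ • fderiv ℝ ψ (hyperMul n (hyperInv n w) z)) z := by
  have h := hψ.hasFDerivAt.comp z (hasFDerivAt_hyperMul_hyperInv w z)
  rw [ContinuousLinearMap.comp_smul, ContinuousLinearMap.comp_id] at h
  exact h

theorem exists_indicator_bound_hyperConv_integrand (hu : Continuous u) (hψ : ContDiff ℝ 1 ψ)
    (hcs : HasCompactSupport ψ) (hs : tsupport ψ ⊆ {z | 0 < z.2}) {z₀ : HalfSpace n}
    (hz₀ : 0 < z₀.2) :
    ∃ ε > 0, ∃ K : Set (HalfSpace n), IsCompact K ∧ K ⊆ {w | 0 < w.2} ∧ ∃ C C' : ℝ,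
      ∀ w, ∀ z ∈ ball z₀ ε,
        ‖u w * ψ (hyperMul n (hyperInv n w) z)‖ ≤ K.indicator (fun _ => C) w ∧
        ‖u w • w.2⁻¹ • fderiv ℝ ψ (hyperMul n (hyperInv n w) z)‖ ≤ K.indicator (fun _ => C') w := by
  obtain ⟨ε, hε, K, hK, hKpos, hmem⟩ :=
    exists_isCompact_forall_hyperMul_hyperInv_mem hcs hs hz₀
  obtain ⟨Cu, hCu⟩ := hK.exists_bound_of_continuousOn hu.continuousOn
  obtain ⟨Ci, hCi⟩ := hK.exists_bound_of_continuousOn (f := fun w : HalfSpace n => w.2⁻¹)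
    (continuousOn_snd.inv₀ fun w hw => (hKpos hw : 0 < w.2).ne')
  obtain ⟨Cψ, hCψ⟩ := hcs.exists_bound_of_continuous hψ.continuous
  obtain ⟨M, hM⟩ := (hcs.fderiv (𝕜 := ℝ)).exists_bound_of_continuous
    (hψ.continuous_fderiv one_ne_zero)
  refine ⟨ε, hε, K, hK, hKpos, Cu * Cψ, Cu * (Ci * M), fun w z hz => ⟨?_, ?_⟩⟩
  · refine norm_le_indicator_const (fun hw => ?_) (fun hw => ?_)
    · rw [norm_mul]
      exact mul_le_mul (hCu w hw) (hCψ _) (norm_nonneg _) ((norm_nonneg _).trans (hCu w hw))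
    · rw [image_eq_zero_of_notMem_tsupport (mt (hmem z hz w) hw), mul_zero]
  · refine norm_le_indicator_const (fun hw => ?_) (fun hw => ?_)
    · rw [norm_smul, norm_smul]
      have hCi0 : 0 ≤ Ci := (norm_nonneg _).trans (hCi w hw)
      exact mul_le_mul (hCu w hw) (mul_le_mul (hCi w hw) (hM _) (norm_nonneg _) hCi0)
        (by positivity) ((norm_nonneg _).trans (hCu w hw))
    · rw [image_eq_zero_of_notMem_tsupport
        (mt (fun h => hmem z hz w (tsupport_fderiv_subset ℝ h)) hw), smul_zero, smul_zero]

theorem exists_hasFDerivAt_hyperConv (hu : Continuous u) (hψ : ContDiff ℝ 1 ψ)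
    (hcs : HasCompactSupport ψ) (hs : tsupport ψ ⊆ {z | 0 < z.2}) {z₀ : HalfSpace n}
    (hz₀ : 0 < z₀.2) :
    ∃ L : HalfSpace n →L[ℝ] ℝ, HasFDerivAt (hyperConv n u ψ) L z₀ ∧
      ∀ v, z₀.2 * L v = hyperConv n u (leftDeriv ψ v) z₀ := by
  obtain ⟨ε, hε, K, hK, hKpos, C, C', hbound⟩ :=
    exists_indicator_bound_hyperConv_integrand hu hψ hcs hs hz₀
  have hint (C : ℝ) := integrable_indicator_const_hyperMeasure hK hKpos C
  set F : HalfSpace n → HalfSpace n → ℝ := fun z w => u w * ψ (hyperMul n (hyperInv n w) z)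
  set F' : HalfSpace n → HalfSpace n → HalfSpace n →L[ℝ] ℝ := fun z w =>
    u w • w.2⁻¹ • fderiv ℝ ψ (hyperMul n (hyperInv n w) z)
  have hF_meas (z : HalfSpace n) : AEStronglyMeasurable (F z) (hyperMeasure n) :=
    (hu.measurable.mul (hψ.continuous.measurable.comp
      (measurable_hyperMul_hyperInv z))).aestronglyMeasurable
  have hF'_meas : AEStronglyMeasurable (F' z₀) (hyperMeasure n) :=
    hu.aestronglyMeasurable.smul (measurable_snd.inv.aestronglyMeasurable.smul
      ((hψ.continuous_fderiv one_ne_zero).comp_aestronglyMeasurable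
        (measurable_hyperMul_hyperInv z₀).aestronglyMeasurable))
  have hF'_int : Integrable (F' z₀) (hyperMeasure n) :=
    (hint C').mono' hF'_meas (ae_of_all _ fun w => (hbound w z₀ (mem_ball_self hε)).2)
  have hF_diff (w z : HalfSpace n) : HasFDerivAt (F · w) (F' z w) z :=
    ((hψ.differentiable one_ne_zero _).hasFDerivAt_comp_hyperMul_hyperInv).const_mul (u w)
  refine ⟨∫ w, F' z₀ w ∂hyperMeasure n,
    hasFDerivAt_integral_of_dominated_of_fderiv_le (ball_mem_nhds z₀ hε)
      (Eventually.of_forall hF_meas)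
      ((hint C).mono' (hF_meas z₀) (ae_of_all _ fun w => (hbound w z₀ (mem_ball_self hε)).1))
      hF'_meas (ae_of_all _ fun w z hz => (hbound w z hz).2) (hint C')
      (ae_of_all _ fun w z _ => hF_diff w z),
    fun v => ?_⟩
  rw [ContinuousLinearMap.integral_apply hF'_int, ← integral_const_mul]
  refine integral_congr_ae (ae_of_all _ fun w => ?_)
  simp only [F', leftDeriv, FunLike.coe_smul, Pi.smul_apply, smul_eq_mul, hyperMul_hyperInv_snd]
  ring

theorem mul_fderiv_hyperConv_apply (hu : Continuous u) (hψ : ContDiff ℝ 1 ψ)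
    (hcs : HasCompactSupport ψ) (hs : tsupport ψ ⊆ {z | 0 < z.2}) {z : HalfSpace n}
    (hz : 0 < z.2) (v : HalfSpace n) :
    z.2 * fderiv ℝ (hyperConv n u ψ) z v = hyperConv n u (leftDeriv ψ v) z := by
  obtain ⟨L, hL, hLv⟩ := exists_hasFDerivAt_hyperConv hu hψ hcs hs hz
  rw [hL.fderiv, hLv]

theorem differentiableOn_hyperConv (hu : Continuous u) (hψ : ContDiff ℝ 1 ψ)
    (hcs : HasCompactSupport ψ) (hs : tsupport ψ ⊆ {z | 0 < z.2}) :
    DifferentiableOn ℝ (hyperConv n u ψ) {z | 0 < z.2} := fun _ hz =>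
  let ⟨_, hL, _⟩ := exists_hasFDerivAt_hyperConv hu hψ hcs hs hz
  hL.differentiableAt.differentiableWithinAt

theorem contDiff_leftDeriv (hψ : ContDiff ℝ (⊤ : ℕ∞) ψ) (v : HalfSpace n) :
    ContDiff ℝ (⊤ : ℕ∞) (leftDeriv ψ v) :=
  contDiff_snd.mul ((hψ.fderiv_right le_rfl).clm_apply contDiff_const)

theorem HasCompactSupport.leftDeriv (hcs : HasCompactSupport ψ) (v : HalfSpace n) :
    HasCompactSupport (leftDeriv ψ v) :=
  (hcs.fderiv_apply (𝕜 := ℝ) v).mul_left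

theorem tsupport_leftDeriv_subset (ψ : HalfSpace n → ℝ) (v : HalfSpace n) :
    tsupport (leftDeriv ψ v) ⊆ tsupport ψ :=
  tsupport_mul_subset_right.trans (tsupport_fderiv_apply_subset ℝ v)

theorem contDiffOn_hyperConv (hu : Continuous u) (hψ : ContDiff ℝ (⊤ : ℕ∞) ψ)
    (hcs : HasCompactSupport ψ) (hs : tsupport ψ ⊆ {z | 0 < z.2}) :
    ContDiffOn ℝ (⊤ : ℕ∞) (hyperConv n u ψ) {z | 0 < z.2} := by
  rw [contDiffOn_infty]
  intro k
  induction k generalizing ψ with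
  | zero =>
    exact contDiffOn_zero.2
      (differentiableOn_hyperConv hu (hψ.of_le (by simp)) hcs hs).continuousOn
  | succ k ih =>
    have hψ₁ : ContDiff ℝ 1 ψ := hψ.of_le (by simp)
    rw [Nat.cast_succ, contDiffOn_succ_iff_fderiv_apply isOpen_setOf_snd_pos.uniqueDiffOn]
    refine ⟨differentiableOn_hyperConv hu hψ₁ hcs hs, by simp, fun v => ?_⟩
    have hinv : ContDiffOn ℝ k (fun z : HalfSpace n => z.2⁻¹) {z | 0 < z.2} :=
      contDiffOn_snd.inv fun z hz => ne_of_gt hz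
    refine (hinv.mul (ih (contDiff_leftDeriv hψ v) (hcs.leftDeriv v)
      ((tsupport_leftDeriv_subset ψ v).trans hs))).congr fun z (hz : 0 < z.2) => ?_
    rw [fderivWithin_of_isOpen isOpen_setOf_snd_pos hz,
      ← mul_fderiv_hyperConv_apply hu hψ₁ hcs hs hz, inv_mul_cancel_left₀ (ne_of_gt hz)]

end

theorem hyperConv_smooth_and_intertwines_general (n : ℕ)
    (u ψ : EuclideanSpace ℝ (Fin (n - 1)) × ℝ → ℝ)
    (hu : Continuous u) (hψ : ContDiff ℝ (⊤ : ℕ∞) ψ) (hψcs : HasCompactSupport ψ)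
    (hψs : tsupport ψ ⊆ {z : EuclideanSpace ℝ (Fin (n - 1)) × ℝ | 0 < z.2}) :
    ContDiffOn ℝ (⊤ : ℕ∞) (hyperConv n u ψ)
      {z : EuclideanSpace ℝ (Fin (n - 1)) × ℝ | 0 < z.2} ∧
    ∀ z : EuclideanSpace ℝ (Fin (n - 1)) × ℝ, 0 < z.2 →
      (∀ i : Fin (n - 1),
        z.2 * fderiv ℝ (hyperConv n u ψ) z (EuclideanSpace.single i (1 : ℝ), (0 : ℝ)) =
          hyperConv n u
            (fun w => w.2 * fderiv ℝ ψ w (EuclideanSpace.single i (1 : ℝ), (0 : ℝ))) z) ∧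
      z.2 * fderiv ℝ (hyperConv n u ψ) z ((0 : EuclideanSpace ℝ (Fin (n - 1))), (1 : ℝ)) =
        hyperConv n u
          (fun w => w.2 * fderiv ℝ ψ w ((0 : EuclideanSpace ℝ (Fin (n - 1))), (1 : ℝ))) z := by
  have hψ₁ : ContDiff ℝ 1 ψ := hψ.of_le (by simp)
  exact ⟨contDiffOn_hyperConv hu hψ hψcs hψs, fun z hz =>
    ⟨fun i => mul_fderiv_hyperConv_apply hu hψ₁ hψcs hψs hz _,
      mul_fderiv_hyperConv_apply hu hψ₁ hψcs hψs hz _⟩⟩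

/-- `ℍ`-convolution with a smooth compactly supported mollifier is smooth on `ℍ` and
intertwines the left-invariant vector fields `y∂_{x_i}` and `y∂_y`:
`y ∂_{x_i}(u ∗ ψ) = u ∗ (η ∂_{ξ_i}ψ)` and `y ∂_y(u ∗ ψ) = u ∗ (η ∂_η ψ)`. -/
theorem hyperConv_smooth_and_intertwines (n : ℕ) (hn : 1 ≤ n)
    (u ψ : EuclideanSpace ℝ (Fin (n - 1)) × ℝ → ℝ)
    (hu : Continuous u) (hψ : ContDiff ℝ (⊤ : ℕ∞) ψ) (hψcs : HasCompactSupport ψ)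
    (hψs : tsupport ψ ⊆ {z : EuclideanSpace ℝ (Fin (n - 1)) × ℝ | 0 < z.2}) :
    ContDiffOn ℝ (⊤ : ℕ∞) (hyperConv n u ψ)
      {z : EuclideanSpace ℝ (Fin (n - 1)) × ℝ | 0 < z.2} ∧
    ∀ z : EuclideanSpace ℝ (Fin (n - 1)) × ℝ, 0 < z.2 →
      (∀ i : Fin (n - 1),
        z.2 * fderiv ℝ (hyperConv n u ψ) z (EuclideanSpace.single i (1 : ℝ), (0 : ℝ)) =
          hyperConv n u
            (fun w => w.2 * fderiv ℝ ψ w (EuclideanSpace.single i (1 : ℝ), (0 : ℝ))) z) ∧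
      z.2 * fderiv ℝ (hyperConv n u ψ) z ((0 : EuclideanSpace ℝ (Fin (n - 1))), (1 : ℝ)) =
        hyperConv n u
          (fun w => w.2 * fderiv ℝ ψ w ((0 : EuclideanSpace ℝ (Fin (n - 1))), (1 : ℝ))) z :=
  hyperConv_smooth_and_intertwines_general n u ψ hu hψ hψcs hψs
end

section
/- Let n ≥ 1 be an integer and 1 < p < ∞. Let B ⊆ ℝⁿ be measurable with 0 < vol(B) < ∞, and let U ⊆ B be measurable with 0 < vol(U) ≤ vol(B)/2. Put a = vol(U)^{−1/p} and u = a·𝟙_U. Then for every measurable v : ℝⁿ → ℝ: (i) if v ≥ 1 almost everywhere on B, then ∫_B |v − u|^p ≥ vol(B)/2; (ii) if v ≤ a/2 almost everywhere on B, then ∫_B |v − u|^p ≥ 2^{−p}. Consequently, if ∫_B |v − u|^p < min(2^{−p}, vol(B)/2), then the sets {x ∈ B : v(x) < 1} and {x ∈ B : v(x) > a/2} both have positive Lebesgue measure. -/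
/-! Off `U` the bump vanishes, so `v ≥ 1` forces `|v - u|^p ≥ 1` on `B \ U`, a set of measure at
least `vol(B)/2`. On `U`, `v ≤ a/2` forces `|v - u|^p ≥ (a/2)^p`, and `a` is chosen so that
`(a/2)^p · vol(U) = 2^{-p}`. The last claim is the contrapositive of the first two. -/

open MeasureTheory ENNReal

theorem ENNReal.ofReal_rpow_half_mul_self {t : ℝ≥0∞} (ht0 : t ≠ 0) (ht : t ≠ ∞) {p : ℝ}
    (hp : p ≠ 0) : ENNReal.ofReal ((t.toReal ^ (-(1 / p)) / 2) ^ p) * t =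
      ENNReal.ofReal (2 ^ (-p)) := by
  have htpos : 0 < t.toReal := ENNReal.toReal_pos ht0 ht
  have hpow : (t.toReal ^ (-(1 / p))) ^ p = t.toReal⁻¹ := by
    rw [← Real.rpow_mul htpos.le, show -(1 / p) * p = -1 by field_simp, Real.rpow_neg_one]
  rw [← ENNReal.ofReal_toReal ht, ENNReal.toReal_ofReal htpos.le,
    ← ENNReal.ofReal_mul (by positivity), Real.div_rpow (by positivity) zero_le_two, hpow,
    Real.rpow_neg zero_le_two]
  congr 1
  field_simp

namespace MeasureTheory

variable {α : Type*} [MeasurableSpace α] {μ : Measure α} {B S U : Set α}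

theorem mul_measure_le_setLIntegral_of_ae_le {c : ℝ≥0∞} {g : α → ℝ≥0∞}
    (hS : MeasurableSet S) (hSB : S ⊆ B) (hg : ∀ᵐ x ∂μ.restrict B, x ∈ S → c ≤ g x) :
    c * μ S ≤ ∫⁻ x in B, g x ∂μ :=
  calc c * μ S = ∫⁻ _ in S, c ∂μ := (setLIntegral_const S c).symm
    _ ≤ ∫⁻ x in S, g x ∂μ := by
      apply lintegral_mono_ae
      filter_upwards [ae_restrict_of_ae_restrict_of_subset hSB hg, ae_restrict_mem hS]
        with x hx hxS using hx hxS
    _ ≤ ∫⁻ x in B, g x ∂μ := lintegral_mono_set hSB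

theorem measure_div_two_le_measure_sdiff (hB : μ B ≠ ∞) (hU : μ U ≤ μ B / 2) :
    μ B / 2 ≤ μ (B \ U) :=
  calc μ B / 2 = μ B - μ B / 2 := (ENNReal.sub_half hB).symm
    _ ≤ μ B - μ U := tsub_le_tsub_left hU _
    _ ≤ μ (B \ U) := le_measure_sdiff

theorem pos_measure_sep_not_of_not_ae_restrict {P : α → Prop} (hB : MeasurableSet B)
    (h : ¬ ∀ᵐ x ∂μ.restrict B, P x) : 0 < μ {x ∈ B | ¬ P x} := by
  rw [ae_restrict_iff' hB, ae_iff] at h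
  simpa only [Classical.not_imp, pos_iff_ne_zero] using h

theorem measure_div_two_le_setLIntegral_of_one_le (hB : MeasurableSet B) (hU : MeasurableSet U)
    (hBfin : μ B ≠ ∞) (hUhalf : μ U ≤ μ B / 2) {p : ℝ} (hp : 0 ≤ p) (c : ℝ) {v : α → ℝ}
    (hv : ∀ᵐ x ∂μ.restrict B, 1 ≤ v x) :
    μ B / 2 ≤ ∫⁻ x in B, ENNReal.ofReal (|v x - U.indicator (fun _ => c) x| ^ p) ∂μ :=
  calc μ B / 2 ≤ 1 * μ (B \ U) := by
        rw [one_mul]; exact measure_div_two_le_measure_sdiff hBfin hUhalf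
    _ ≤ _ := by
      refine mul_measure_le_setLIntegral_of_ae_le (hB.diff hU) Set.sdiff_subset ?_
      filter_upwards [hv] with x hx hxBU
      rw [Set.indicator_of_notMem hxBU.2, sub_zero, ENNReal.one_le_ofReal]
      exact Real.one_le_rpow (hx.trans (le_abs_self _)) hp

theorem ofReal_two_rpow_neg_le_setLIntegral_of_le_half (hU : MeasurableSet U) (hUB : U ⊆ B)
    (hU0 : μ U ≠ 0) (hUfin : μ U ≠ ∞) {p : ℝ} (hp : 0 < p) {a : ℝ}
    (ha : a = (μ U).toReal ^ (-(1 / p))) {v : α → ℝ} (hv : ∀ᵐ x ∂μ.restrict B, v x ≤ a / 2) :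
    ENNReal.ofReal (2 ^ (-p)) ≤
      ∫⁻ x in B, ENNReal.ofReal (|v x - U.indicator (fun _ => a) x| ^ p) ∂μ := by
  have ha0 : 0 ≤ a := ha ▸ Real.rpow_nonneg ENNReal.toReal_nonneg _
  rw [← ENNReal.ofReal_rpow_half_mul_self hU0 hUfin hp.ne', ← ha]
  refine mul_measure_le_setLIntegral_of_ae_le hU hUB ?_
  filter_upwards [hv] with x hx hxU
  have hdist : a / 2 ≤ |v x - a| := by
    rw [abs_sub_comm]
    exact le_abs.2 (Or.inl (by linarith))
  rw [Set.indicator_of_mem hxU]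
  gcongr

end MeasureTheory

theorem lp_bump_dichotomy_general (n : ℕ) (p : ℝ) (hp : 1 < p)
    (B U : Set (Fin n → ℝ)) (hBmeas : MeasurableSet B) (hUmeas : MeasurableSet U)
    (hUB : U ⊆ B) (hBfin : volume B < ⊤)
    (hU0 : 0 < volume U) (hUhalf : volume U ≤ volume B / 2)
    (a : ℝ) (ha : a = (volume U).toReal ^ (-(1 / p)))
    (u : (Fin n → ℝ) → ℝ) (hu : u = U.indicator fun _ => a)
    (v : (Fin n → ℝ) → ℝ) :
    ((∀ᵐ x ∂volume.restrict B, 1 ≤ v x) →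
      volume B / 2 ≤ ∫⁻ x in B, ENNReal.ofReal (|v x - u x| ^ p) ∂volume) ∧
    ((∀ᵐ x ∂volume.restrict B, v x ≤ a / 2) →
      ENNReal.ofReal ((2 : ℝ) ^ (-p)) ≤ ∫⁻ x in B, ENNReal.ofReal (|v x - u x| ^ p) ∂volume) ∧
    ((∫⁻ x in B, ENNReal.ofReal (|v x - u x| ^ p) ∂volume <
        min (ENNReal.ofReal ((2 : ℝ) ^ (-p))) (volume B / 2)) →
      0 < volume {x ∈ B | v x < 1} ∧ 0 < volume {x ∈ B | a / 2 < v x}) := by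
  have hp0 : 0 < p := zero_lt_one.trans hp
  have hUfin : volume U ≠ ∞ :=
    ne_top_of_le_ne_top (ENNReal.div_ne_top hBfin.ne two_ne_zero) hUhalf
  subst hu
  have h_one := fun hv : ∀ᵐ x ∂volume.restrict B, 1 ≤ v x =>
    measure_div_two_le_setLIntegral_of_one_le hBmeas hUmeas hBfin.ne hUhalf hp0.le a hv
  have h_half := fun hv : ∀ᵐ x ∂volume.restrict B, v x ≤ a / 2 =>
    ofReal_two_rpow_neg_le_setLIntegral_of_le_half hUmeas hUB hU0.ne' hUfin hp0 ha hv
  refine ⟨h_one, h_half, fun hlt => ⟨?_, ?_⟩⟩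
  · simpa only [not_le] using pos_measure_sep_not_of_not_ae_restrict hBmeas fun hv =>
      (h_one hv).not_gt (hlt.trans_le (min_le_right _ _))
  · simpa only [not_le] using pos_measure_sep_not_of_not_ae_restrict hBmeas fun hv =>
      (h_half hv).not_gt (hlt.trans_le (min_le_left _ _))

/-- **Quantitative `L^p` dichotomy for normalized bumps**: with `a = vol(U)^{-1/p}` and
`u = a·𝟙_U`, any measurable `v` with `v ≥ 1` a.e. on `B` has `∫_B |v-u|^p ≥ vol(B)/2`,
any `v ≤ a/2` a.e. on `B` has `∫_B |v-u|^p ≥ 2^{-p}`; hence any `v` with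
`∫_B |v-u|^p < min(2^{-p}, vol(B)/2)` takes values `< 1` and `> a/2` on sets of
positive measure in `B`. -/
theorem lp_bump_dichotomy (n : ℕ) (hn : 1 ≤ n) (p : ℝ) (hp : 1 < p)
    (B U : Set (Fin n → ℝ)) (hBmeas : MeasurableSet B) (hUmeas : MeasurableSet U)
    (hUB : U ⊆ B) (hB0 : 0 < volume B) (hBfin : volume B < ⊤)
    (hU0 : 0 < volume U) (hUhalf : volume U ≤ volume B / 2)
    (a : ℝ) (ha : a = (volume U).toReal ^ (-(1 / p)))
    (u : (Fin n → ℝ) → ℝ) (hu : u = U.indicator fun _ => a)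
    (v : (Fin n → ℝ) → ℝ) (hv : Measurable v) :
    ((∀ᵐ x ∂volume.restrict B, 1 ≤ v x) →
      volume B / 2 ≤ ∫⁻ x in B, ENNReal.ofReal (|v x - u x| ^ p) ∂volume) ∧
    ((∀ᵐ x ∂volume.restrict B, v x ≤ a / 2) →
      ENNReal.ofReal ((2 : ℝ) ^ (-p)) ≤ ∫⁻ x in B, ENNReal.ofReal (|v x - u x| ^ p) ∂volume) ∧
    ((∫⁻ x in B, ENNReal.ofReal (|v x - u x| ^ p) ∂volume <
        min (ENNReal.ofReal ((2 : ℝ) ^ (-p))) (volume B / 2)) →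
      0 < volume {x ∈ B | v x < 1} ∧ 0 < volume {x ∈ B | a / 2 < v x}) :=
  lp_bump_dichotomy_general n p hp B U hBmeas hUmeas hUB hBfin hU0 hUhalf a ha u hu v
end
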